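/- There exists a (unique) k-algebra homomorphism Δ : H → H ⊗_k H (where H ⊗_k H carries the tensor product algebra structure) satisfying Δ(K) = K ⊗ K, Δ(K⁻¹) = K⁻¹ ⊗ K⁻¹, Δ(E) = (E ⊗ 1)(T₁ ⊗ K^{n²−n} + T₂ ⊗ 1) + K ⊗ E, and Δ(F) = (F ⊗ 1)(T₃ ⊗ K^{n²−1} + T₄ ⊗ K^{n−1}) + 1 ⊗ F; that is, these assignments on the generators respect all the defining relations of H. -/

import Mathlib

open scoped TensorProduct

noncomputable section

namespace SmallQuasiQuantumGroup

variable (k : Type) [Field k]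

inductive QGRel (n : ℕ) (q : k) :
    FreeAlgebra k (Fin 4) → FreeAlgebra k (Fin 4) → Prop
  | KKinv : QGRel n q (FreeAlgebra.ι k 2 * FreeAlgebra.ι k 3) 1
  | KinvK : QGRel n q (FreeAlgebra.ι k 3 * FreeAlgebra.ι k 2) 1
  | KE : QGRel n q (FreeAlgebra.ι k 2 * FreeAlgebra.ι k 0 * FreeAlgebra.ι k 3)
      (q ^ 2 • FreeAlgebra.ι k 0)
  | KF : QGRel n q (FreeAlgebra.ι k 2 * FreeAlgebra.ι k 1 * FreeAlgebra.ι k 3)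
      ((q ^ 2)⁻¹ • FreeAlgebra.ι k 1)
  | EF : QGRel n q
      (FreeAlgebra.ι k 0 * FreeAlgebra.ι k 1 - FreeAlgebra.ι k 1 * FreeAlgebra.ι k 0)
      ((q - q⁻¹)⁻¹ • (FreeAlgebra.ι k 2 - FreeAlgebra.ι k 3))
  | Epow : QGRel n q (FreeAlgebra.ι k 0 ^ n) 0
  | Fpow : QGRel n q (FreeAlgebra.ι k 1 ^ n) 0
  | Kpow : QGRel n q (FreeAlgebra.ι k 2 ^ n ^ 2) 1

def QG (n : ℕ) (q : k) : Type := RingQuot (QGRel k n q)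

instance (n : ℕ) (q : k) : Ring (QG k n q) := inferInstanceAs (Ring (RingQuot _))
instance (n : ℕ) (q : k) : Algebra k (QG k n q) := inferInstanceAs (Algebra k (RingQuot _))

def gE (n : ℕ) (q : k) : QG k n q := RingQuot.mkAlgHom k (QGRel k n q) (FreeAlgebra.ι k 0)
def gF (n : ℕ) (q : k) : QG k n q := RingQuot.mkAlgHom k (QGRel k n q) (FreeAlgebra.ι k 1)
def gK (n : ℕ) (q : k) : QG k n q := RingQuot.mkAlgHom k (QGRel k n q) (FreeAlgebra.ι k 2)
def gKi (n : ℕ) (q : k) : QG k n q := RingQuot.mkAlgHom k (QGRel k n q) (FreeAlgebra.ι k 3)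

def eIdem (n : ℕ) (q : k) (i : ℕ) : QG k n q :=
  (n : k)⁻¹ • ∑ t ∈ Finset.range n, q ^ (t * i) • gK k n q ^ (t * n)

/-! ### The simple modules `V(t,r)` and `V_l` -/

/-- The scalar `γ_j` appearing in the `F`-action on the module `V(t,r)`
(here `q = Q^n` where `Q = 𝐪` is the primitive `n²`-th root of unity). -/
def gammaCoef (n : ℕ) (Q : k) (t : ℕ) (r : ℤ) (j : ℕ) : k :=
  (Q ^ n - (Q ^ n)⁻¹)⁻¹ *
    (Q ^ (-(t : ℤ)) * ((Q ^ n) ^ (-(2 * r)) - (Q ^ n) ^ (-(2 * (r + (j : ℤ))))) /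
        (1 - (Q ^ n) ^ (-2 : ℤ)) -
      Q ^ (t : ℤ) * ((Q ^ n) ^ (2 * r) - (Q ^ n) ^ (2 * (r + (j : ℤ)))) /
        (1 - (Q ^ n) ^ (2 : ℤ)))

/-- `IsTypeV k n Q t r V` says that the `H`-module `V` is (a copy of) the `n`-dimensional
module `V(t,r)`: it has a `k`-basis `v₀, …, v_{n-1}` (indexed here from `0`, corresponding to
`v₁, …, v_n` in the paper) with `K vᵢ = 𝐪^t q^{2(r+i)} vᵢ`, `E vᵢ = vᵢ₊₁` (`E v_{n-1} = 0`),
`F v₀ = 0` and `F vᵢ = γ_i v_{i-1}` for `i ≥ 1`. -/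
def IsTypeV (n : ℕ) (Q : k) (t : ℕ) (r : ℤ) (V : Type) [AddCommGroup V] [Module k V]
    [Module (QG k n (Q ^ n)) V] : Prop :=
  ∃ v : Module.Basis (Fin n) k V,
    (∀ i : Fin n, gK k n (Q ^ n) • v i =
      (Q ^ (t : ℤ) * (Q ^ n) ^ (2 * (r + (i.1 : ℤ)))) • v i) ∧
    (∀ i : Fin n, gE k n (Q ^ n) • v i = if h : i.1 + 1 < n then v ⟨i.1 + 1, h⟩ else 0) ∧
    (∀ i : Fin n, i.1 = 0 → gF k n (Q ^ n) • v i = 0) ∧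
    (∀ i : Fin n, 0 < i.1 → gF k n (Q ^ n) • v i =
      gammaCoef k n Q t r i.1 • v ⟨i.1 - 1, lt_of_le_of_lt (Nat.sub_le _ _) i.2⟩)

/-- The scalar `β_i(l)` appearing in the `F`-action on the simple module `V_l`. -/
def betaCoef (n : ℕ) (Q : k) (l i : ℕ) : k :=
  (∑ s ∈ Finset.range i, (Q ^ n) ^ (2 * s)) * (1 - (Q ^ n) ^ (2 * ((i : ℤ) - (l : ℤ)))) /
    ((Q ^ n) ^ (2 * (i : ℤ) - (l : ℤ)) - (Q ^ n) ^ (2 * (i : ℤ) - (l : ℤ) - 2))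

/-- `IsTypeVl k n Q l V` says that the `H`-module `V` is (a copy of) the `l`-dimensional
simple module `V_l`: it has a `k`-basis `m₀, …, m_{l-1}` (indexed here from `0`, corresponding
to `m₁, …, m_l` in the paper) with `K mᵢ = q^{2i+1-l} mᵢ`, `E mᵢ = mᵢ₊₁` (`E m_{l-1} = 0`),
`F m₀ = 0` and `F mᵢ = β_i(l) m_{i-1}` for `i ≥ 1`. -/
def IsTypeVl (n : ℕ) (Q : k) (l : ℕ) (V : Type) [AddCommGroup V] [Module k V]
    [Module (QG k n (Q ^ n)) V] : Prop :=
  ∃ m : Module.Basis (Fin l) k V,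
    (∀ i : Fin l, gK k n (Q ^ n) • m i = (Q ^ n) ^ (2 * (i.1 : ℤ) + 1 - (l : ℤ)) • m i) ∧
    (∀ i : Fin l, gE k n (Q ^ n) • m i = if h : i.1 + 1 < l then m ⟨i.1 + 1, h⟩ else 0) ∧
    (∀ i : Fin l, i.1 = 0 → gF k n (Q ^ n) • m i = 0) ∧
    (∀ i : Fin l, 0 < i.1 → gF k n (Q ^ n) • m i =
      betaCoef k n Q l i.1 • m ⟨i.1 - 1, lt_of_le_of_lt (Nat.sub_le _ _) i.2⟩)

/-! ### Corner algebras `He_i` -/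

/-- For a central idempotent `a`, the set `{x | xa = x ∧ ax = x}` (which equals `Ra`)
is a `k`-submodule of `R`. -/
def cornerSubmodule (R : Type) [Ring R] [Algebra k R] (a : R) : Submodule k R where
  carrier := {x | x * a = x ∧ a * x = x}
  add_mem' := fun hx hy => ⟨by rw [add_mul, hx.1, hy.1], by rw [mul_add, hx.2, hy.2]⟩
  zero_mem' := ⟨zero_mul a, mul_zero a⟩
  smul_mem' := fun c x hx => ⟨by rw [smul_mul_assoc, hx.1], by rw [mul_smul_comm, hx.2]⟩

/-- The corner ring `Ra = {x | xa = x ∧ ax = x}` of an idempotent `a`; it is a `k`-algebra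
with identity element `a`. -/
def Corner (R : Type) [Ring R] [Algebra k R] (a : R) (_ : IsIdempotentElem a) : Type :=
  ↥(cornerSubmodule k R a)

namespace Corner

variable {R : Type} [Ring R] [Algebra k R] {a : R} {ha : IsIdempotentElem a}

instance : AddCommGroup (Corner k R a ha) :=
  inferInstanceAs (AddCommGroup ↥(cornerSubmodule k R a))

instance : Module k (Corner k R a ha) :=
  inferInstanceAs (Module k ↥(cornerSubmodule k R a))

/-- The underlying element of `R` of an element of the corner ring. -/
def val (x : Corner k R a ha) : R := Subtype.val x

instance : Ring (Corner k R a ha) :=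
  { (inferInstance : AddCommGroup (Corner k R a ha)) with
    mul := fun x y => ⟨x.1 * y.1,
      by rw [mul_assoc, y.2.1], by rw [← mul_assoc, x.2.2]⟩
    one := ⟨a, ha, ha⟩
    mul_assoc := fun x y z => Subtype.ext (mul_assoc x.1 y.1 z.1)
    one_mul := fun x => Subtype.ext x.2.2
    mul_one := fun x => Subtype.ext x.2.1
    left_distrib := fun x y z => Subtype.ext (mul_add x.1 y.1 z.1)
    right_distrib := fun x y z => Subtype.ext (add_mul x.1 y.1 z.1)
    zero_mul := fun x => Subtype.ext (zero_mul x.1)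
    mul_zero := fun x => Subtype.ext (mul_zero x.1) }

instance : Algebra k (Corner k R a ha) :=
  Algebra.ofModule (fun c x y => Subtype.ext (smul_mul_assoc c x.1 y.1))
    (fun c x y => Subtype.ext (mul_smul_comm c x.1 y.1))

end Corner
/-! ### The comultiplication data -/

/-- The idempotent `1_s = (1/n²) ∑_{r=0}^{n²-1} 𝐪^{sr} K^r` of `H`. -/
def oneIdem (n : ℕ) (Q : k) (s : ℕ) : QG k n (Q ^ n) :=
  ((n : k) ^ 2)⁻¹ • ∑ r ∈ Finset.range (n ^ 2), Q ^ (s * r) • gK k n (Q ^ n) ^ r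

/-- `T₁ = ∑_{i=0}^{2n-1} 1_i`. -/
def Tone (n : ℕ) (Q : k) : QG k n (Q ^ n) := ∑ i ∈ Finset.range (2 * n), oneIdem k n Q i
/-- `T₂ = ∑_{i=2n}^{n²-1} 1_i`. -/
def Ttwo (n : ℕ) (Q : k) : QG k n (Q ^ n) := ∑ i ∈ Finset.Ico (2 * n) (n ^ 2), oneIdem k n Q i
/-- `T₃ = ∑_{i=0}^{n²-2n-1} 1_i`. -/
def Tthree (n : ℕ) (Q : k) : QG k n (Q ^ n) :=
  ∑ i ∈ Finset.range (n ^ 2 - 2 * n), oneIdem k n Q i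
/-- `T₄ = ∑_{i=n²-2n}^{n²-1} 1_i`. -/
def Tfour (n : ℕ) (Q : k) : QG k n (Q ^ n) :=
  ∑ i ∈ Finset.Ico (n ^ 2 - 2 * n) (n ^ 2), oneIdem k n Q i

/-- `IsDelta k n Q Δ` says that the `k`-algebra map `Δ : H → H ⊗ H` is the comultiplication
of the small quasi-quantum group, i.e. takes the prescribed values on `K`, `K⁻¹`, `E`, `F`. -/
def IsDelta (n : ℕ) (Q : k)
    (Δ : QG k n (Q ^ n) →ₐ[k] QG k n (Q ^ n) ⊗[k] QG k n (Q ^ n)) : Prop :=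
  Δ (gK k n (Q ^ n)) = gK k n (Q ^ n) ⊗ₜ[k] gK k n (Q ^ n) ∧
  Δ (gKi k n (Q ^ n)) = gKi k n (Q ^ n) ⊗ₜ[k] gKi k n (Q ^ n) ∧
  Δ (gE k n (Q ^ n)) =
    (gE k n (Q ^ n) ⊗ₜ[k] 1) *
        (Tone k n Q ⊗ₜ[k] gK k n (Q ^ n) ^ (n ^ 2 - n) + Ttwo k n Q ⊗ₜ[k] 1) +
      gK k n (Q ^ n) ⊗ₜ[k] gE k n (Q ^ n) ∧
  Δ (gF k n (Q ^ n)) =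
    (gF k n (Q ^ n) ⊗ₜ[k] 1) *
        (Tthree k n Q ⊗ₜ[k] gK k n (Q ^ n) ^ (n ^ 2 - 1) +
          Tfour k n Q ⊗ₜ[k] gK k n (Q ^ n) ^ (n - 1)) +
      1 ⊗ₜ[k] gF k n (Q ^ n)

/-- The action of an algebra `A` on a module `M`, as a `k`-linear map `A →ₗ[k] (M →ₗ[k] M)`. -/
def endoMap (A M : Type) [Ring A] [Algebra k A] [AddCommGroup M] [Module k M] [Module A M]
    [IsScalarTower k A M] : A →ₗ[k] M →ₗ[k] M where
  toFun a :=
    { toFun := fun m => a • m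
      map_add' := fun _ _ => smul_add _ _ _
      map_smul' := fun c m => smul_comm a c m }
  map_add' a b := LinearMap.ext fun m => add_smul a b m
  map_smul' c a := LinearMap.ext fun m => smul_assoc c a m

/-- `SmulViaDelta k n Q Δ M N` says that the given `H`-module structure on `M ⊗[k] N` is the
one obtained from the `H`-module structures of `M` and `N` through the comultiplication `Δ`:
`h` acts on `M ⊗ N` as the operator `(ρ_M ⊗ ρ_N)(Δ(h))`. -/
def SmulViaDelta (n : ℕ) (Q : k)
    (Δ : QG k n (Q ^ n) →ₐ[k] QG k n (Q ^ n) ⊗[k] QG k n (Q ^ n)) (M N : Type)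
    [AddCommGroup M] [Module k M] [Module (QG k n (Q ^ n)) M]
    [IsScalarTower k (QG k n (Q ^ n)) M]
    [AddCommGroup N] [Module k N] [Module (QG k n (Q ^ n)) N]
    [IsScalarTower k (QG k n (Q ^ n)) N]
    [Module (QG k n (Q ^ n)) (M ⊗[k] N)] : Prop :=
  ∀ (h : QG k n (Q ^ n)) (x : M ⊗[k] N),
    h • x = TensorProduct.homTensorHomMap (RingHom.id k) M N M N
      (TensorProduct.map (endoMap k (QG k n (Q ^ n)) M) (endoMap k (QG k n (Q ^ n)) N)
        (Δ h)) x

/-! ### The elements `T^i_j` and `A^{ij}_k` -/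

/-- The idempotent `T^i_j = (1/n) ∑_{s=0}^{n-1} 𝐪^{((j-1)n+i)s} K^s e_i` of `He_i`. -/
def Tij (n : ℕ) (Q : k) (i j : ℕ) : QG k n (Q ^ n) :=
  (n : k)⁻¹ • ∑ s ∈ Finset.range n,
    Q ^ (((j - 1) * n + i) * s) • (gK k n (Q ^ n) ^ s * eIdem k n (Q ^ n) i)

/-- The scalar `a^{ij}_{k1}` for `k ≥ 2`. -/
def aOne (n : ℕ) (Q : k) (i j kk : ℕ) : k :=
  ((Q ^ n) ^ (2 * ((kk : ℤ) - 1)) * Q ^ ((1 - (j : ℤ)) * n - (i : ℤ)) -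
      (Q ^ n) ^ (2 * (1 - (kk : ℤ))) * Q ^ ((i : ℤ) - (1 - (j : ℤ)) * n)) /
    (Q ^ n - (Q ^ n)⁻¹)

/-- The scalars `a^{ij}_{ks}` (`1 ≤ s ≤ k ≤ n`), defined by `a^{ij}_{kk} = 1`,
`a^{ij}_{k1}` as in `aOne`, and the recursion `a^{ij}_{ks} = a^{ij}_{k1} + a^{ij}_{k-1,s-1}`. -/
def aCoef (n : ℕ) (Q : k) (i j : ℕ) : ℕ → ℕ → k
  | _, 0 => 0
  | kk, 1 => if kk = 1 then 1 else aOne k n Q i j kk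
  | kk, s + 2 => if kk = s + 2 then 1 else aOne k n Q i j kk + aCoef n Q i j (kk - 1) (s + 1)

/-- The element `A^{ij}_k = ∑_{p=0}^{k-1} (∏_{t=0}^{p} a^{ij}_{k,k-t}) E^{k-1-p} F^{n-1-p} e_i`
of `H`. -/
def Aelem (n : ℕ) (Q : k) (i j kk : ℕ) : QG k n (Q ^ n) :=
  ∑ p ∈ Finset.range kk,
    (∏ t ∈ Finset.range (p + 1), aCoef k n Q i j kk (kk - t)) •
      (gE k n (Q ^ n) ^ (kk - 1 - p) * gF k n (Q ^ n) ^ (n - 1 - p) * eIdem k n (Q ^ n) i)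

/-- The integer `r_{k,j}`. -/
def rkj (n kk j : ℕ) : ℤ :=
  if (2 * (kk : ℤ) - (j : ℤ)) % 2 = 0 then (2 * (kk : ℤ) - (j : ℤ)) / 2
  else ((n : ℤ) + 2 * (kk : ℤ) - (j : ℤ)) / 2

/-! ### The algebra `B_i` of Statement 1 -/

/-- Defining relations of the algebra `B_i`, on the generators
`0 ↦ x`, `1 ↦ y`, `2 ↦ z`, `3 ↦ z'`. -/
inductive BRel (n i : ℕ) (q : k) :
    FreeAlgebra k (Fin 4) → FreeAlgebra k (Fin 4) → Prop
  | zz' : BRel n i q (FreeAlgebra.ι k 2 * FreeAlgebra.ι k 3) 1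
  | z'z : BRel n i q (FreeAlgebra.ι k 3 * FreeAlgebra.ι k 2) 1
  | zx : BRel n i q (FreeAlgebra.ι k 2 * FreeAlgebra.ι k 0 * FreeAlgebra.ι k 3)
      (q ^ 2 • FreeAlgebra.ι k 0)
  | zy : BRel n i q (FreeAlgebra.ι k 2 * FreeAlgebra.ι k 1 * FreeAlgebra.ι k 3)
      ((q ^ 2)⁻¹ • FreeAlgebra.ι k 1)
  | xy : BRel n i q
      (FreeAlgebra.ι k 0 * FreeAlgebra.ι k 1 - FreeAlgebra.ι k 1 * FreeAlgebra.ι k 0)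
      ((q - q⁻¹)⁻¹ • (FreeAlgebra.ι k 2 - FreeAlgebra.ι k 3))
  | xpow : BRel n i q (FreeAlgebra.ι k 0 ^ n) 0
  | ypow : BRel n i q (FreeAlgebra.ι k 1 ^ n) 0
  | zpow : BRel n i q (FreeAlgebra.ι k 2 ^ n) (q ^ (n - i) • 1)


section QBin
variable {R : Type} [Field R]

def qb (t : R) : ℕ → ℕ → R
  | 0, 0 => 1
  | 0, _ + 1 => 0
  | m + 1, 0 => qb t m 0
  | m + 1, a + 1 => qb t m a + t ^ (a + 1) * qb t m (a + 1)

lemma qb_zero (t : R) : ∀ m, qb t m 0 = 1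
  | 0 => rfl
  | m + 1 => by rw [qb, qb_zero t m]

lemma qb_of_lt (t : R) : ∀ m a, m < a → qb t m a = 0
  | 0, _ + 1, _ => rfl
  | m + 1, a + 1, h => by
      rw [qb, qb_of_lt t m a (by omega), qb_of_lt t m (a + 1) (by omega), mul_zero, add_zero]

variable {A : Type} [Ring A] [Algebra R A]

lemma smul_pow_comm (t : R) (x y : A) (h : y * x = t • (x * y)) :
    ∀ a, y * x ^ a = t ^ a • (x ^ a * y)
  | 0 => by simp
  | a + 1 => by
      rw [pow_succ', ← mul_assoc, h, smul_mul_assoc, mul_assoc, smul_pow_comm t x y h a,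
        mul_smul_comm, smul_smul, ← pow_succ', ← mul_assoc, ← pow_succ']

lemma q_add_pow (t : R) (x y : A) (h : y * x = t • (x * y)) :
    ∀ m, (x + y) ^ m = ∑ a ∈ Finset.range (m + 1), qb t m a • (x ^ a * y ^ (m - a))
  | 0 => by simp [qb]
  | m + 1 => by
      rw [pow_succ', q_add_pow t x y h m, Finset.mul_sum]
      have expand : ∀ a ∈ Finset.range (m + 1),
          (x + y) * (qb t m a • (x ^ a * y ^ (m - a))) =
            qb t m a • (x ^ (a + 1) * y ^ (m - a)) +
              (t ^ a * qb t m a) • (x ^ a * y ^ (m + 1 - a)) := by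
        intro a ha
        simp only [Finset.mem_range, Nat.lt_succ_iff] at ha
        have hy' : y * (x ^ a * y ^ (m - a)) = t ^ a • (x ^ a * y ^ (m + 1 - a)) := by
          rw [← mul_assoc, smul_pow_comm t x y h a, smul_mul_assoc, mul_assoc, ← pow_succ',
            show m - a + 1 = m + 1 - a from by omega]
        rw [add_mul, mul_smul_comm, mul_smul_comm, ← mul_assoc, ← pow_succ', hy', smul_smul,
          mul_comm (qb t m a) (t ^ a)]
      rw [Finset.sum_congr rfl expand, Finset.sum_add_distrib]
      rw [Finset.sum_range_succ' (fun a => qb t (m + 1) a • (x ^ a * y ^ (m + 1 - a))) (m + 1)]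
      rw [Finset.sum_range_succ' (fun a => (t ^ a * qb t m a) • (x ^ a * y ^ (m + 1 - a))) m]
      have e0 : (t ^ 0 * qb t m 0) • (x ^ 0 * y ^ (m + 1 - 0)) =
          qb t (m + 1) 0 • (x ^ 0 * y ^ (m + 1 - 0)) := by
        rw [pow_zero, one_mul, qb]
      rw [e0, ← add_assoc]
      congr 1
      have step : ∀ a ∈ Finset.range (m + 1),
          qb t (m + 1) (a + 1) • (x ^ (a + 1) * y ^ (m + 1 - (a + 1))) =
            qb t m a • (x ^ (a + 1) * y ^ (m - a)) +
              (t ^ (a + 1) * qb t m (a + 1)) • (x ^ (a + 1) * y ^ (m - a)) := by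
        intro a ha
        rw [show m + 1 - (a + 1) = m - a from by omega, qb, add_smul]
      rw [Finset.sum_congr rfl step, Finset.sum_add_distrib]
      congr 1
      rw [Finset.sum_range_succ, qb_of_lt t m (m + 1) (by omega), mul_zero, zero_smul, add_zero]
      apply Finset.sum_congr rfl
      intro a ha
      simp only [Finset.mem_range] at ha
      rw [show m + 1 - (a + 1) = m - a from by omega]

lemma qb_prod (t : R) : ∀ m a, (∏ i ∈ Finset.range a, (1 - t ^ (i + 1))) * qb t m a =
    ∏ i ∈ Finset.range a, (1 - t ^ (m - i))
  | m, 0 => by simp [qb_zero]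
  | 0, a + 1 => by
      rw [qb_of_lt t 0 (a + 1) (by omega), mul_zero]
      refine (Finset.prod_eq_zero (Finset.mem_range.mpr (Nat.succ_pos a)) ?_).symm
      simp
  | m + 1, a + 1 => by
      rcases le_or_gt a m with hle | hlt
      · set p := ∏ i ∈ Finset.range a, (1 - t ^ (i + 1)) with hp
        set w := ∏ i ∈ Finset.range a, (1 - t ^ (m - i)) with hw
        have hA : p * qb t m a = w := qb_prod t m a
        have hB : p * (1 - t ^ (a + 1)) * qb t m (a + 1) = w * (1 - t ^ (m - a)) := by
          have := qb_prod t m (a + 1)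
          rwa [Finset.prod_range_succ, Finset.prod_range_succ] at this
        have hR : ∏ i ∈ Finset.range (a + 1), (1 - t ^ (m + 1 - i)) = (1 - t ^ (m + 1)) * w := by
          rw [Finset.prod_range_succ' (fun i => (1 - t ^ (m + 1 - i))) a]
          rw [Nat.sub_zero, mul_comm]
          congr 1
          apply Finset.prod_congr rfl
          intro i _
          rw [show m + 1 - (i + 1) = m - i from by omega]
        have hkey : (1 - t ^ (a + 1)) + t ^ (a + 1) * (1 - t ^ (m - a)) = 1 - t ^ (m + 1) := by
          rw [mul_sub, mul_one, ← pow_add, show a + 1 + (m - a) = m + 1 from by omega]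
          ring
        rw [Finset.prod_range_succ, qb, hR]
        linear_combination (1 - t ^ (a + 1)) * hA + t ^ (a + 1) * hB + w * hkey
      · have hz1 : qb t m a = 0 := qb_of_lt t m a hlt
        have hz2 : qb t m (a + 1) = 0 := qb_of_lt t m (a + 1) (by omega)
        rw [qb, hz1, hz2, mul_zero, add_zero, mul_zero]
        refine (Finset.prod_eq_zero (Finset.mem_range.mpr (show m + 1 < a + 1 by omega)) ?_).symm
        simp

lemma qb_prim_eq_zero {t : R} {N : ℕ} (ht : IsPrimitiveRoot t N) {a : ℕ} (h0 : 0 < a)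
    (hA : a < N) : qb t N a = 0 := by
  have h := qb_prod t N a
  have hr : ∏ i ∈ Finset.range a, (1 - t ^ (N - i)) = 0 := by
    apply Finset.prod_eq_zero (Finset.mem_range.mpr h0)
    rw [Nat.sub_zero, ht.pow_eq_one, sub_self]
  rw [hr] at h
  have hl : (∏ i ∈ Finset.range a, (1 - t ^ (i + 1))) ≠ 0 := by
    rw [Finset.prod_ne_zero_iff]
    intro i hi
    simp only [Finset.mem_range] at hi
    have h1 := ht.pow_ne_one_of_pos_of_lt (Nat.succ_ne_zero i) (by omega)
    intro hc
    exact h1 (sub_eq_zero.mp hc).symm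
  exact (mul_eq_zero.mp h).resolve_left hl

lemma add_pow_eq_zero_of_qcomm {t : R} {N : ℕ} {x y : A} (ht : IsPrimitiveRoot t N)
    (h : y * x = t • (x * y)) (hx : x ^ N = 0) (hy : y ^ N = 0) : (x + y) ^ N = 0 := by
  rw [q_add_pow t x y h N]
  apply Finset.sum_eq_zero
  intro a ha
  simp only [Finset.mem_range, Nat.lt_succ_iff] at ha
  rcases Nat.eq_zero_or_pos a with rfl | h0
  · simp [hy]
  rcases eq_or_lt_of_le ha with rfl | hlt
  · simp [hx]
  · rw [qb_prim_eq_zero ht h0 hlt, zero_smul]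

lemma push_pow_eq_zero {A : Type} [Ring A] (E' : A) (f : ℕ → A)
    (h : ∀ j, f j * E' = E' * f (j + 1)) {m : ℕ} (hE : E' ^ m = 0) :
    (E' * f 0) ^ m = 0 := by
  have aux : ∀ r j, f j * E' ^ r = E' ^ r * f (j + r) := by
    intro r
    induction r with
    | zero => intro j; simp
    | succ r ih =>
        intro j
        rw [pow_succ', ← mul_assoc, h j, mul_assoc, ih (j + 1), ← mul_assoc, ← pow_succ',
          show j + 1 + r = j + (r + 1) from by omega]
  have main : ∀ r, ∃ c, (E' * f 0) ^ r = E' ^ r * c := by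
    intro r
    induction r with
    | zero => exact ⟨1, by simp⟩
    | succ r ih =>
        obtain ⟨c, hc⟩ := ih
        refine ⟨f r * c, ?_⟩
        rw [pow_succ', hc, ← mul_assoc, mul_assoc E' (f 0), aux r 0,
          show (0 : ℕ) + r = r from by omega, ← mul_assoc, ← pow_succ', mul_assoc]
  obtain ⟨c, hc⟩ := main m
  rw [hc, hE, zero_mul]

end QBin

section HRel

variable (n : ℕ) (q : k)

lemma K_mul_Ki : gK k n q * gKi k n q = 1 := by
  have h := RingQuot.mkAlgHom_rel k (QGRel.KKinv (k := k) (n := n) (q := q))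
  rw [map_mul, map_one] at h
  exact h

lemma Ki_mul_K : gKi k n q * gK k n q = 1 := by
  have h := RingQuot.mkAlgHom_rel k (QGRel.KinvK (k := k) (n := n) (q := q))
  rw [map_mul, map_one] at h
  exact h

lemma Kpow_one : gK k n q ^ (n ^ 2) = 1 := by
  have h := RingQuot.mkAlgHom_rel k (QGRel.Kpow (k := k) (n := n) (q := q))
  rw [map_pow, map_one] at h
  exact h

lemma Epow_zero : gE k n q ^ n = 0 := by
  have h := RingQuot.mkAlgHom_rel k (QGRel.Epow (k := k) (n := n) (q := q))
  rw [map_pow, map_zero] at h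
  exact h

lemma Fpow_zero : gF k n q ^ n = 0 := by
  have h := RingQuot.mkAlgHom_rel k (QGRel.Fpow (k := k) (n := n) (q := q))
  rw [map_pow, map_zero] at h
  exact h

lemma KEKi : gK k n q * gE k n q * gKi k n q = q ^ 2 • gE k n q := by
  have h := RingQuot.mkAlgHom_rel k (QGRel.KE (k := k) (n := n) (q := q))
  rw [map_mul, map_mul, map_smul] at h
  exact h

lemma KFKi : gK k n q * gF k n q * gKi k n q = (q ^ 2)⁻¹ • gF k n q := by
  have h := RingQuot.mkAlgHom_rel k (QGRel.KF (k := k) (n := n) (q := q))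
  rw [map_mul, map_mul, map_smul] at h
  exact h

lemma EF_comm : gE k n q * gF k n q - gF k n q * gE k n q =
    (q - q⁻¹)⁻¹ • (gK k n q - gKi k n q) := by
  have h := RingQuot.mkAlgHom_rel k (QGRel.EF (k := k) (n := n) (q := q))
  rw [map_sub, map_mul, map_mul, map_smul, map_sub] at h
  exact h

lemma K_mul_E : gK k n q * gE k n q = q ^ 2 • (gE k n q * gK k n q) := by
  calc gK k n q * gE k n q = gK k n q * gE k n q * 1 := (mul_one _).symm
    _ = gK k n q * gE k n q * (gKi k n q * gK k n q) := by rw [Ki_mul_K]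
    _ = gK k n q * gE k n q * gKi k n q * gK k n q := (mul_assoc _ _ _).symm
    _ = (q ^ 2 • gE k n q) * gK k n q := by rw [KEKi]
    _ = q ^ 2 • (gE k n q * gK k n q) := smul_mul_assoc _ _ _

lemma K_mul_F : gK k n q * gF k n q = (q ^ 2)⁻¹ • (gF k n q * gK k n q) := by
  calc gK k n q * gF k n q = gK k n q * gF k n q * 1 := (mul_one _).symm
    _ = gK k n q * gF k n q * (gKi k n q * gK k n q) := by rw [Ki_mul_K]
    _ = gK k n q * gF k n q * gKi k n q * gK k n q := (mul_assoc _ _ _).symm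
    _ = ((q ^ 2)⁻¹ • gF k n q) * gK k n q := by rw [KFKi]
    _ = (q ^ 2)⁻¹ • (gF k n q * gK k n q) := smul_mul_assoc _ _ _

lemma Ki_eq (hn : 0 < n) : gKi k n q = gK k n q ^ (n ^ 2 - 1) := by
  have h1 : gK k n q ^ (n ^ 2 - 1) * gK k n q = 1 := by
    rw [← pow_succ, show n ^ 2 - 1 + 1 = n ^ 2 from by
      have : 0 < n ^ 2 := by positivity
      omega, Kpow_one]
  calc gKi k n q = 1 * gKi k n q := (one_mul _).symm
    _ = gK k n q ^ (n ^ 2 - 1) * gK k n q * gKi k n q := by rw [h1]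
    _ = gK k n q ^ (n ^ 2 - 1) * (gK k n q * gKi k n q) := mul_assoc _ _ _
    _ = gK k n q ^ (n ^ 2 - 1) := by rw [K_mul_Ki, mul_one]

end HRel

section Scalars

variable {n : ℕ} {Q : k}

lemma Qnsq (hQ : IsPrimitiveRoot Q (n ^ 2)) : Q ^ (n ^ 2) = 1 := hQ.pow_eq_one

lemma Qred (hQ : IsPrimitiveRoot Q (n ^ 2)) (a c : ℕ) : Q ^ (a + n ^ 2 * c) = Q ^ a := by
  rw [pow_add, pow_mul, Qnsq k hQ, one_pow, mul_one]

lemma hQ0 (hn : 2 < n) (hQ : IsPrimitiveRoot Q (n ^ 2)) : Q ≠ 0 :=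
  hQ.ne_zero (pow_ne_zero 2 (by omega))

lemma q2_eq : ((Q ^ n) ^ 2 : k) = Q ^ (2 * n) := by
  rw [← pow_mul, Nat.mul_comm]

lemma q2inv_eq (hn : 2 < n) (hQ : IsPrimitiveRoot Q (n ^ 2)) :
    (((Q ^ n) ^ 2)⁻¹ : k) = Q ^ (2 * n ^ 2 - 2 * n) := by
  have h2n : 2 * n ≤ n ^ 2 := by
    rw [pow_two]; exact Nat.mul_le_mul_right n (by omega)
  rw [q2_eq k]
  refine inv_eq_of_mul_eq_one_right ?_
  rw [← pow_add, show 2 * n + (2 * n ^ 2 - 2 * n) = n ^ 2 * 2 from by omega, pow_mul,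
    Qnsq k hQ, one_pow]

lemma nk_ne [CharZero k] (hn : 2 < n) : ((n : k) ^ 2) ≠ 0 := by
  exact pow_ne_zero 2 (Nat.cast_ne_zero.mpr (by omega))

/-- Geometric sum of `Q`-powers. -/
lemma Qgeom (hn : 2 < n) (hQ : IsPrimitiveRoot Q (n ^ 2)) (e : ℕ) (he : Q ^ e ≠ 1) :
    ∑ r ∈ Finset.range (n ^ 2), Q ^ (e * r) = 0 := by
  have : ∀ r, Q ^ (e * r) = (Q ^ e) ^ r := fun r => by rw [pow_mul]
  rw [Finset.sum_congr rfl fun r _ => this r, geom_sum_eq he, ← pow_mul, Nat.mul_comm, pow_mul,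
    Qnsq k hQ, one_pow, sub_self, zero_div]

lemma Qgeom_ne (hn : 2 < n) (hQ : IsPrimitiveRoot Q (n ^ 2)) {e : ℕ} (h0 : 0 < e)
    (h2 : e < 2 * n ^ 2) (hne : e ≠ n ^ 2) : Q ^ e ≠ 1 := by
  intro hc
  obtain ⟨c, hc⟩ := (hQ.pow_eq_one_iff_dvd e).mp hc
  have h1 : c ≠ 0 := by rintro rfl; omega
  have h2 : c ≠ 1 := by rintro rfl; omega
  have h3 : n ^ 2 * 2 ≤ n ^ 2 * c := Nat.mul_le_mul_left _ (by omega)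
  omega

end Scalars

section Idem

variable {n : ℕ} {Q : k}

lemma Qpow_cast (hn : 2 < n) (hQ : IsPrimitiveRoot Q (n ^ 2)) {a b : ℕ}
    (h : a + b = n ^ 2) : Q ^ a * Q ^ b = 1 := by
  rw [← pow_add, h, Qnsq k hQ]

lemma K_mul_oneIdem (hn : 2 < n) (hQ : IsPrimitiveRoot Q (n ^ 2)) (s : ℕ) (hs : s ≤ n ^ 2) :
    gK k n (Q ^ n) * oneIdem k n Q s = Q ^ (n ^ 2 - s) • oneIdem k n Q s := by
  have hpos : 0 < n ^ 2 := pow_pos (by omega) 2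
  simp only [oneIdem]
  rw [mul_smul_comm, Finset.mul_sum]
  rw [smul_comm (Q ^ (n ^ 2 - s)) ((((n : k)) ^ 2)⁻¹)]
  congr 1
  rw [Finset.smul_sum]
  have lhs_eq : ∀ r ∈ Finset.range (n ^ 2),
      gK k n (Q ^ n) * (Q ^ (s * r) • gK k n (Q ^ n) ^ r) =
        Q ^ (s * r) • gK k n (Q ^ n) ^ (r + 1) := by
    intro r _
    rw [mul_smul_comm, ← pow_succ']
  have rhs_eq : ∀ r ∈ Finset.range (n ^ 2),
      Q ^ (n ^ 2 - s) • (Q ^ (s * r) • gK k n (Q ^ n) ^ r) =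
        Q ^ (n ^ 2 - s + s * r) • gK k n (Q ^ n) ^ r := by
    intro r _
    rw [smul_smul, ← pow_add]
  rw [Finset.sum_congr rfl lhs_eq, Finset.sum_congr rfl rhs_eq]
  have key : ∀ N, N + 1 = n ^ 2 →
      ∑ r ∈ Finset.range (N + 1), Q ^ (s * r) • gK k n (Q ^ n) ^ (r + 1) =
        ∑ r ∈ Finset.range (N + 1), Q ^ (n ^ 2 - s + s * r) • gK k n (Q ^ n) ^ r := by
    intro N hN
    rw [Finset.sum_range_succ, Finset.sum_range_succ']
    congr 1
    · apply Finset.sum_congr rfl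
      intro r _
      congr 1
      rw [show n ^ 2 - s + s * (r + 1) = s * r + n ^ 2 * 1 from by rw [Nat.mul_succ]; omega,
        Qred k hQ]
    · rw [hN, Kpow_one, pow_zero, Nat.mul_zero, Nat.add_zero]
      congr 1
      apply mul_left_cancel₀ (pow_ne_zero s (hQ0 k hn hQ))
      rw [← pow_add, show s + s * N = s * n ^ 2 from by rw [← hN, Nat.mul_succ]; omega,
        Nat.mul_comm, pow_mul, Qnsq k hQ, one_pow, ← pow_add,
        show s + (n ^ 2 - s) = n ^ 2 from by omega, Qnsq k hQ]
  have h2 := key (n ^ 2 - 1) (by omega)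
  rw [show n ^ 2 - 1 + 1 = n ^ 2 from by omega] at h2
  exact h2

lemma Kpow_mul_oneIdem (hn : 2 < n) (hQ : IsPrimitiveRoot Q (n ^ 2)) (m s : ℕ)
    (hs : s ≤ n ^ 2) :
    gK k n (Q ^ n) ^ m * oneIdem k n Q s = Q ^ ((n ^ 2 - s) * m) • oneIdem k n Q s := by
  induction m with
  | zero => simp
  | succ m ih =>
      rw [pow_succ', mul_assoc, ih, mul_smul_comm, K_mul_oneIdem k hn hQ s hs, smul_smul,
        ← pow_add, (Nat.mul_succ (n ^ 2 - s) m).symm]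

lemma oneIdem_mul_oneIdem [CharZero k] (hn : 2 < n) (hQ : IsPrimitiveRoot Q (n ^ 2))
    (s t : ℕ) (hs : s < n ^ 2) (ht : t < n ^ 2) :
    oneIdem k n Q s * oneIdem k n Q t = if s = t then oneIdem k n Q t else 0 := by
  have key : oneIdem k n Q s * oneIdem k n Q t =
      (((n : k) ^ 2)⁻¹ * ∑ r ∈ Finset.range (n ^ 2), Q ^ ((s + (n ^ 2 - t)) * r)) •
        oneIdem k n Q t := by
    conv_lhs => rw [oneIdem]
    rw [smul_mul_assoc, Finset.sum_mul]
    have term : ∀ r ∈ Finset.range (n ^ 2),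
        (Q ^ (s * r) • gK k n (Q ^ n) ^ r) * oneIdem k n Q t =
          Q ^ ((s + (n ^ 2 - t)) * r) • oneIdem k n Q t := by
      intro r _
      rw [smul_mul_assoc, Kpow_mul_oneIdem k hn hQ r t (le_of_lt ht), smul_smul, ← pow_add,
        ← Nat.add_mul]
    rw [Finset.sum_congr rfl term, ← Finset.sum_smul, smul_smul]
  by_cases hst : s = t
  · subst hst
    rw [if_pos rfl, key, show s + (n ^ 2 - s) = n ^ 2 from by omega]
    have : ∀ r ∈ Finset.range (n ^ 2), Q ^ (n ^ 2 * r) = (1 : k) := by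
      intro r _
      rw [pow_mul, Qnsq k hQ, one_pow]
    rw [Finset.sum_congr rfl this, Finset.sum_const, Finset.card_range, nsmul_eq_mul, mul_one,
      Nat.cast_pow, inv_mul_cancel₀ (nk_ne k hn), one_smul]
  · rw [if_neg hst, key, Qgeom k hn hQ _ (Qgeom_ne k hn hQ (by omega) (by omega) (by omega)),
      mul_zero, zero_smul]

lemma sum_oneIdem [CharZero k] (hn : 2 < n) (hQ : IsPrimitiveRoot Q (n ^ 2)) :
    ∑ s ∈ Finset.range (n ^ 2), oneIdem k n Q s = 1 := by
  have hpos : 0 < n ^ 2 := pow_pos (by omega) 2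
  simp only [oneIdem]
  rw [← Finset.smul_sum, Finset.sum_comm]
  have inner : ∀ r ∈ Finset.range (n ^ 2),
      (∑ s ∈ Finset.range (n ^ 2), Q ^ (s * r) • gK k n (Q ^ n) ^ r) =
        (if r = 0 then ((n : k) ^ 2) • (1 : QG k n (Q ^ n)) else 0) := by
    intro r hr
    simp only [Finset.mem_range] at hr
    rw [← Finset.sum_smul]
    by_cases h0 : r = 0
    · subst h0
      rw [if_pos rfl]
      simp only [Nat.mul_zero, pow_zero]
      rw [Finset.sum_const, Finset.card_range, nsmul_eq_mul, mul_one, Nat.cast_pow]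
    · rw [if_neg h0]
      have hsum : ∑ s ∈ Finset.range (n ^ 2), Q ^ (s * r) = 0 := by
        have : ∀ s ∈ Finset.range (n ^ 2), Q ^ (s * r) = Q ^ (r * s) := by
          intro s _; rw [Nat.mul_comm]
        rw [Finset.sum_congr rfl this]
        exact Qgeom k hn hQ r (hQ.pow_ne_one_of_pos_of_lt (by omega) hr)
      rw [hsum, zero_smul]
  rw [Finset.sum_congr rfl inner, Finset.sum_ite_eq' (Finset.range (n ^ 2)) 0
    (fun _ => ((n : k) ^ 2) • (1 : QG k n (Q ^ n))),
    if_pos (Finset.mem_range.mpr hpos), smul_smul, inv_mul_cancel₀ (nk_ne k hn), one_smul]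

lemma Kpow_mul_E (n : ℕ) (Q : k) (r : ℕ) : gK k n (Q ^ n) ^ r * gE k n (Q ^ n) =
    Q ^ (2 * n * r) • (gE k n (Q ^ n) * gK k n (Q ^ n) ^ r) := by
  induction r with
  | zero => simp
  | succ r ih =>
      rw [pow_succ', mul_assoc, ih, mul_smul_comm, ← mul_assoc, K_mul_E, q2_eq k,
        smul_mul_assoc, smul_smul, ← pow_add,
        show 2 * n * r + 2 * n = 2 * n * (r + 1) from by ring]
      congr 1
      rw [mul_assoc, ← pow_succ']

lemma Kpow_mul_F (hn : 2 < n) (hQ : IsPrimitiveRoot Q (n ^ 2)) (r : ℕ) :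
    gK k n (Q ^ n) ^ r * gF k n (Q ^ n) =
      Q ^ ((2 * n ^ 2 - 2 * n) * r) • (gF k n (Q ^ n) * gK k n (Q ^ n) ^ r) := by
  induction r with
  | zero => simp
  | succ r ih =>
      rw [pow_succ', mul_assoc, ih, mul_smul_comm, ← mul_assoc, K_mul_F, q2inv_eq k hn hQ,
        smul_mul_assoc, smul_smul, ← pow_add, (Nat.mul_succ (2 * n ^ 2 - 2 * n) r).symm]
      congr 1
      rw [mul_assoc, ← pow_succ']

lemma oneIdem_mul_E (hn : 2 < n) (hQ : IsPrimitiveRoot Q (n ^ 2)) (s : ℕ) :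
    oneIdem k n Q s * gE k n (Q ^ n) = gE k n (Q ^ n) * oneIdem k n Q (s + 2 * n) := by
  simp only [oneIdem]
  rw [smul_mul_assoc, mul_smul_comm]
  congr 1
  rw [Finset.sum_mul, Finset.mul_sum]
  apply Finset.sum_congr rfl
  intro r _
  rw [smul_mul_assoc, Kpow_mul_E, smul_smul, ← pow_add, mul_smul_comm,
    show s * r + 2 * n * r = (s + 2 * n) * r from (Nat.add_mul s (2 * n) r).symm]

lemma oneIdem_mul_F (hn : 2 < n) (hQ : IsPrimitiveRoot Q (n ^ 2)) (s : ℕ) :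
    oneIdem k n Q s * gF k n (Q ^ n) =
      gF k n (Q ^ n) * oneIdem k n Q (s + (n ^ 2 - 2 * n)) := by
  have h2n : 2 * n ≤ n ^ 2 := by
    rw [pow_two]; exact Nat.mul_le_mul_right n (by omega)
  simp only [oneIdem]
  rw [smul_mul_assoc, mul_smul_comm]
  congr 1
  rw [Finset.sum_mul, Finset.mul_sum]
  apply Finset.sum_congr rfl
  intro r _
  rw [smul_mul_assoc, Kpow_mul_F k hn hQ, smul_smul, ← pow_add, mul_smul_comm,
    show s * r + (2 * n ^ 2 - 2 * n) * r = (s + (n ^ 2 - 2 * n)) * r + n ^ 2 * r from by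
      rw [← Nat.add_mul, ← Nat.add_mul]
      have : s + (2 * n ^ 2 - 2 * n) = s + (n ^ 2 - 2 * n) + n ^ 2 := by omega
      rw [this]]
  have hone : Q ^ (n ^ 2 * r) = 1 := by rw [pow_mul, Qnsq k hQ, one_pow]
  rw [pow_add, hone, mul_one]

lemma oneIdem_period (hQ : IsPrimitiveRoot Q (n ^ 2)) (s : ℕ) :
    oneIdem k n Q (s + n ^ 2) = oneIdem k n Q s := by
  simp only [oneIdem]
  congr 1
  apply Finset.sum_congr rfl
  intro r _
  rw [show (s + n ^ 2) * r = s * r + n ^ 2 * r from Nat.add_mul s (n ^ 2) r, Qred k hQ]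

lemma oneIdem_K_comm (n : ℕ) (Q : k) (s m : ℕ) :
    gK k n (Q ^ n) ^ m * oneIdem k n Q s = oneIdem k n Q s * gK k n (Q ^ n) ^ m := by
  simp only [oneIdem]
  rw [smul_mul_assoc, mul_smul_comm]
  congr 1
  rw [Finset.sum_mul, Finset.mul_sum]
  apply Finset.sum_congr rfl
  intro r _
  rw [smul_mul_assoc, mul_smul_comm, ← pow_add, ← pow_add, Nat.add_comm]

end Idem

section TLem

variable {n : ℕ} {Q : k}

lemma h2n_le (hn : 2 < n) : 2 * n ≤ n ^ 2 := by
  rw [pow_two]; exact Nat.mul_le_mul_right n (by omega)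

lemma Tone_add_Ttwo [CharZero k] (hn : 2 < n) (hQ : IsPrimitiveRoot Q (n ^ 2)) :
    Tone k n Q + Ttwo k n Q = 1 := by
  simp only [Tone, Ttwo]
  rw [Finset.range_eq_Ico,
    Finset.sum_Ico_consecutive _ (Nat.zero_le _) (h2n_le hn), ← Finset.range_eq_Ico,
    sum_oneIdem k hn hQ]

lemma Tthree_add_Tfour [CharZero k] (hn : 2 < n) (hQ : IsPrimitiveRoot Q (n ^ 2)) :
    Tthree k n Q + Tfour k n Q = 1 := by
  simp only [Tthree, Tfour]
  rw [Finset.range_eq_Ico,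
    Finset.sum_Ico_consecutive _ (Nat.zero_le _) (Nat.sub_le _ _), ← Finset.range_eq_Ico,
    sum_oneIdem k hn hQ]

lemma sumIdem_mul [CharZero k] (hn : 2 < n) (hQ : IsPrimitiveRoot Q (n ^ 2))
    (S T : Finset ℕ) (hS : ∀ s ∈ S, s < n ^ 2) (hT : ∀ t ∈ T, t < n ^ 2) :
    (∑ s ∈ S, oneIdem k n Q s) * (∑ t ∈ T, oneIdem k n Q t) =
      ∑ s ∈ S ∩ T, oneIdem k n Q s := by
  rw [Finset.sum_mul_sum]
  have h1 : ∀ s ∈ S, (∑ t ∈ T, oneIdem k n Q s * oneIdem k n Q t) =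
      if s ∈ T then oneIdem k n Q s else 0 := by
    intro s hs
    have h2 : ∀ t ∈ T, oneIdem k n Q s * oneIdem k n Q t =
        if s = t then oneIdem k n Q s else 0 := by
      intro t ht
      rw [oneIdem_mul_oneIdem k hn hQ s t (hS s hs) (hT t ht)]
      by_cases h : s = t
      · subst h; simp
      · simp [h]
    rw [Finset.sum_congr rfl h2, Finset.sum_ite_eq T s (fun _ => oneIdem k n Q s)]
  rw [Finset.sum_congr rfl h1, Finset.sum_ite_mem S T (fun s => oneIdem k n Q s)]

lemma Tone_mul_Tone [CharZero k] (hn : 2 < n) (hQ : IsPrimitiveRoot Q (n ^ 2)) :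
    Tone k n Q * Tone k n Q = Tone k n Q := by
  simp only [Tone]
  rw [sumIdem_mul k hn hQ _ _ (fun s hs => by
      simp only [Finset.mem_range] at hs; have := h2n_le hn; omega)
    (fun s hs => by simp only [Finset.mem_range] at hs; have := h2n_le hn; omega),
    Finset.inter_self]

lemma Ttwo_mul_Ttwo [CharZero k] (hn : 2 < n) (hQ : IsPrimitiveRoot Q (n ^ 2)) :
    Ttwo k n Q * Ttwo k n Q = Ttwo k n Q := by
  simp only [Ttwo]
  rw [sumIdem_mul k hn hQ _ _ (fun s hs => by simp only [Finset.mem_Ico] at hs; omega)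
    (fun s hs => by simp only [Finset.mem_Ico] at hs; omega), Finset.inter_self]

lemma Tone_mul_Ttwo [CharZero k] (hn : 2 < n) (hQ : IsPrimitiveRoot Q (n ^ 2)) :
    Tone k n Q * Ttwo k n Q = 0 := by
  simp only [Tone, Ttwo]
  rw [sumIdem_mul k hn hQ _ _ (fun s hs => by
      simp only [Finset.mem_range] at hs; have := h2n_le hn; omega)
    (fun s hs => by simp only [Finset.mem_Ico] at hs; omega),
    show Finset.range (2 * n) ∩ Finset.Ico (2 * n) (n ^ 2) = ∅ from by
      apply Finset.eq_empty_iff_forall_notMem.mpr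
      intro x hx
      simp only [Finset.mem_inter, Finset.mem_range, Finset.mem_Ico] at hx
      omega,
    Finset.sum_empty]

lemma Ttwo_mul_Tone [CharZero k] (hn : 2 < n) (hQ : IsPrimitiveRoot Q (n ^ 2)) :
    Ttwo k n Q * Tone k n Q = 0 := by
  simp only [Tone, Ttwo]
  rw [sumIdem_mul k hn hQ _ _ (fun s hs => by simp only [Finset.mem_Ico] at hs; omega)
    (fun s hs => by simp only [Finset.mem_range] at hs; have := h2n_le hn; omega),
    show Finset.Ico (2 * n) (n ^ 2) ∩ Finset.range (2 * n) = ∅ from by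
      apply Finset.eq_empty_iff_forall_notMem.mpr
      intro x hx
      simp only [Finset.mem_inter, Finset.mem_range, Finset.mem_Ico] at hx
      omega,
    Finset.sum_empty]

lemma Tthree_mul_Tthree [CharZero k] (hn : 2 < n) (hQ : IsPrimitiveRoot Q (n ^ 2)) :
    Tthree k n Q * Tthree k n Q = Tthree k n Q := by
  simp only [Tthree]
  rw [sumIdem_mul k hn hQ _ _ (fun s hs => by simp only [Finset.mem_range] at hs; omega)
    (fun s hs => by simp only [Finset.mem_range] at hs; omega), Finset.inter_self]

lemma Tfour_mul_Tfour [CharZero k] (hn : 2 < n) (hQ : IsPrimitiveRoot Q (n ^ 2)) :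
    Tfour k n Q * Tfour k n Q = Tfour k n Q := by
  simp only [Tfour]
  rw [sumIdem_mul k hn hQ _ _ (fun s hs => by simp only [Finset.mem_Ico] at hs; omega)
    (fun s hs => by simp only [Finset.mem_Ico] at hs; omega), Finset.inter_self]

lemma Tthree_mul_Tfour [CharZero k] (hn : 2 < n) (hQ : IsPrimitiveRoot Q (n ^ 2)) :
    Tthree k n Q * Tfour k n Q = 0 := by
  simp only [Tthree, Tfour]
  rw [sumIdem_mul k hn hQ _ _ (fun s hs => by simp only [Finset.mem_range] at hs; omega)
    (fun s hs => by simp only [Finset.mem_Ico] at hs; omega),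
    show Finset.range (n ^ 2 - 2 * n) ∩ Finset.Ico (n ^ 2 - 2 * n) (n ^ 2) = ∅ from by
      apply Finset.eq_empty_iff_forall_notMem.mpr
      intro x hx
      simp only [Finset.mem_inter, Finset.mem_range, Finset.mem_Ico] at hx
      omega,
    Finset.sum_empty]

lemma Tfour_mul_Tthree [CharZero k] (hn : 2 < n) (hQ : IsPrimitiveRoot Q (n ^ 2)) :
    Tfour k n Q * Tthree k n Q = 0 := by
  simp only [Tthree, Tfour]
  rw [sumIdem_mul k hn hQ _ _ (fun s hs => by simp only [Finset.mem_Ico] at hs; omega)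
    (fun s hs => by simp only [Finset.mem_range] at hs; omega),
    show Finset.Ico (n ^ 2 - 2 * n) (n ^ 2) ∩ Finset.range (n ^ 2 - 2 * n) = ∅ from by
      apply Finset.eq_empty_iff_forall_notMem.mpr
      intro x hx
      simp only [Finset.mem_inter, Finset.mem_range, Finset.mem_Ico] at hx
      omega,
    Finset.sum_empty]

lemma Tone_mul_F (hn : 2 < n) (hQ : IsPrimitiveRoot Q (n ^ 2)) :
    Tone k n Q * gF k n (Q ^ n) = gF k n (Q ^ n) * Tfour k n Q := by
  simp only [Tone, Tfour]
  rw [Finset.sum_mul, Finset.mul_sum, Finset.sum_Ico_eq_sum_range,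
    Nat.sub_sub_self (h2n_le hn)]
  apply Finset.sum_congr rfl
  intro i _
  rw [oneIdem_mul_F k hn hQ i, Nat.add_comm i (n ^ 2 - 2 * n)]

lemma Ttwo_mul_F (hn : 2 < n) (hQ : IsPrimitiveRoot Q (n ^ 2)) :
    Ttwo k n Q * gF k n (Q ^ n) = gF k n (Q ^ n) * Tthree k n Q := by
  simp only [Ttwo, Tthree]
  rw [Finset.sum_mul, Finset.sum_Ico_eq_sum_range, Finset.mul_sum]
  apply Finset.sum_congr rfl
  intro j _
  rw [oneIdem_mul_F k hn hQ (2 * n + j),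
    show 2 * n + j + (n ^ 2 - 2 * n) = j + n ^ 2 from by have := h2n_le hn; omega,
    oneIdem_period k hQ j]

lemma Tthree_mul_E (hn : 2 < n) (hQ : IsPrimitiveRoot Q (n ^ 2)) :
    Tthree k n Q * gE k n (Q ^ n) = gE k n (Q ^ n) * Ttwo k n Q := by
  simp only [Tthree, Ttwo]
  rw [Finset.sum_mul, Finset.mul_sum, Finset.sum_Ico_eq_sum_range]
  apply Finset.sum_congr rfl
  intro j _
  rw [oneIdem_mul_E k hn hQ j, Nat.add_comm j (2 * n)]

lemma Tfour_mul_E (hn : 2 < n) (hQ : IsPrimitiveRoot Q (n ^ 2)) :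
    Tfour k n Q * gE k n (Q ^ n) = gE k n (Q ^ n) * Tone k n Q := by
  simp only [Tfour, Tone]
  rw [Finset.sum_mul, Finset.sum_Ico_eq_sum_range, Nat.sub_sub_self (h2n_le hn),
    Finset.mul_sum]
  apply Finset.sum_congr rfl
  intro j _
  rw [oneIdem_mul_E k hn hQ (n ^ 2 - 2 * n + j),
    show n ^ 2 - 2 * n + j + 2 * n = j + n ^ 2 from by have := h2n_le hn; omega,
    oneIdem_period k hQ j]

lemma sumIdem_Kpow_comm (S : Finset ℕ) (m : ℕ) :
    (∑ i ∈ S, oneIdem k n Q i) * gK k n (Q ^ n) ^ m =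
      gK k n (Q ^ n) ^ m * ∑ i ∈ S, oneIdem k n Q i := by
  rw [Finset.sum_mul, Finset.mul_sum]
  exact Finset.sum_congr rfl fun i _ => (oneIdem_K_comm k n Q i m).symm

lemma Tone_Kpow_comm (m : ℕ) :
    Tone k n Q * gK k n (Q ^ n) ^ m = gK k n (Q ^ n) ^ m * Tone k n Q :=
  sumIdem_Kpow_comm k _ m

lemma Ttwo_Kpow_comm (m : ℕ) :
    Ttwo k n Q * gK k n (Q ^ n) ^ m = gK k n (Q ^ n) ^ m * Ttwo k n Q :=
  sumIdem_Kpow_comm k _ m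

lemma Tthree_Kpow_comm (m : ℕ) :
    Tthree k n Q * gK k n (Q ^ n) ^ m = gK k n (Q ^ n) ^ m * Tthree k n Q :=
  sumIdem_Kpow_comm k _ m

lemma Tfour_Kpow_comm (m : ℕ) :
    Tfour k n Q * gK k n (Q ^ n) ^ m = gK k n (Q ^ n) ^ m * Tfour k n Q :=
  sumIdem_Kpow_comm k _ m

end TLem

section Scal2

variable {n : ℕ} {Q : k}

lemma sc1 (hn : 2 < n) (hQ : IsPrimitiveRoot Q (n ^ 2)) :
    Q ^ ((2 * n ^ 2 - 2 * n) * (n ^ 2 - n)) = 1 := by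
  have h2n := h2n_le hn
  rw [show (2 * n ^ 2 - 2 * n) * (n ^ 2 - n) = 0 + n ^ 2 * (2 * (n - 1) * (n - 1)) from by
      zify [show 2 * n ≤ 2 * n ^ 2 from by omega, show n ≤ n ^ 2 from by omega,
        show 1 ≤ n from by omega]
      ring,
    Qred k hQ, pow_zero]

lemma sc2 (hn : 2 < n) (hQ : IsPrimitiveRoot Q (n ^ 2)) :
    Q ^ (2 * n * (n ^ 2 - n)) = 1 := by
  have h2n := h2n_le hn
  rw [show 2 * n * (n ^ 2 - n) = 0 + n ^ 2 * (2 * (n - 1)) from by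
      zify [show n ≤ n ^ 2 from by omega, show 1 ≤ n from by omega]
      ring,
    Qred k hQ, pow_zero]

lemma sc3 (hn : 2 < n) (hQ : IsPrimitiveRoot Q (n ^ 2)) :
    Q ^ (2 * n * (n ^ 2 - 1)) = Q ^ (2 * n ^ 2 - 2 * n) := by
  have h2n := h2n_le hn
  rw [show 2 * n * (n ^ 2 - 1) = (2 * n ^ 2 - 2 * n) + n ^ 2 * (2 * n - 2) from by
      zify [show 2 * n ≤ 2 * n ^ 2 from by omega, show 1 ≤ n ^ 2 from by omega,
        show 2 ≤ 2 * n from by omega]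
      ring,
    Qred k hQ]

lemma sc4 (hn : 2 < n) (hQ : IsPrimitiveRoot Q (n ^ 2)) :
    Q ^ (2 * n * (n - 1)) = Q ^ (2 * n ^ 2 - 2 * n) := by
  have h2n := h2n_le hn
  rw [show 2 * n * (n - 1) = (2 * n ^ 2 - 2 * n) + n ^ 2 * 0 from by
      zify [show 2 * n ≤ 2 * n ^ 2 from by omega, show 1 ≤ n from by omega]
      ring,
    Qred k hQ]

lemma sc5 (hn : 2 < n) (hQ : IsPrimitiveRoot Q (n ^ 2)) :
    Q ^ ((2 * n ^ 2 - 2 * n) * (n ^ 2 - 1)) = Q ^ (2 * n) := by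
  have h2n := h2n_le hn
  have h8 : 2 ≤ 2 * n ^ 2 - 2 * n := by omega
  rw [show (2 * n ^ 2 - 2 * n) * (n ^ 2 - 1) = 2 * n + n ^ 2 * (2 * n ^ 2 - 2 * n - 2) from by
      zify [show 2 * n ≤ 2 * n ^ 2 from by omega, show 1 ≤ n ^ 2 from by omega, h8]
      ring,
    Qred k hQ]

lemma sc6 (hn : 2 < n) (hQ : IsPrimitiveRoot Q (n ^ 2)) :
    Q ^ ((2 * n ^ 2 - 2 * n) * (n - 1)) = Q ^ (2 * n) := by
  have h2n := h2n_le hn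
  rw [show (2 * n ^ 2 - 2 * n) * (n - 1) = 2 * n + n ^ 2 * (2 * n - 4) from by
      zify [show 2 * n ≤ 2 * n ^ 2 from by omega, show 1 ≤ n from by omega,
        show 4 ≤ 2 * n from by omega]
      ring,
    Qred k hQ]

end Scal2

section DeltaElts

variable (n : ℕ) (Q : k)

/-- The image of `K` under `Δ`. -/
def DK : QG k n (Q ^ n) ⊗[k] QG k n (Q ^ n) := gK k n (Q ^ n) ⊗ₜ[k] gK k n (Q ^ n)

/-- The image of `K⁻¹` under `Δ`. -/
def DKi : QG k n (Q ^ n) ⊗[k] QG k n (Q ^ n) := gKi k n (Q ^ n) ⊗ₜ[k] gKi k n (Q ^ n)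

/-- The image of `E` under `Δ`. -/
def DE : QG k n (Q ^ n) ⊗[k] QG k n (Q ^ n) :=
  (gE k n (Q ^ n) ⊗ₜ[k] 1) *
      (Tone k n Q ⊗ₜ[k] gK k n (Q ^ n) ^ (n ^ 2 - n) + Ttwo k n Q ⊗ₜ[k] 1) +
    gK k n (Q ^ n) ⊗ₜ[k] gE k n (Q ^ n)

/-- The image of `F` under `Δ`. -/
def DF : QG k n (Q ^ n) ⊗[k] QG k n (Q ^ n) :=
  (gF k n (Q ^ n) ⊗ₜ[k] 1) *
      (Tthree k n Q ⊗ₜ[k] gK k n (Q ^ n) ^ (n ^ 2 - 1) +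
        Tfour k n Q ⊗ₜ[k] gK k n (Q ^ n) ^ (n - 1)) +
    1 ⊗ₜ[k] gF k n (Q ^ n)

lemma idem_pow {A : Type} [Monoid A] {x : A} (hx : x * x = x) :
    ∀ {m : ℕ}, 0 < m → x ^ m = x := by
  intro m hm
  induction m with
  | zero => omega
  | succ m ih =>
      rcases Nat.eq_zero_or_pos m with rfl | hm'
      · rw [pow_one]
      · rw [pow_succ, ih hm', hx]

variable {n' : ℕ} {Q' : k}

lemma DE_eq2 [CharZero k] (hn : 2 < n') (hQ : IsPrimitiveRoot Q' (n' ^ 2)) :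
    DE k n' Q' = (gE k n' (Q' ^ n') ⊗ₜ[k] 1) *
      (Tone k n' Q' ⊗ₜ[k] (gK k n' (Q' ^ n') ^ (n' ^ 2 - n')) + Ttwo k n' Q' ⊗ₜ[k] 1) +
      gK k n' (Q' ^ n') ⊗ₜ[k] gE k n' (Q' ^ n') := by
  rw [DE, Algebra.TensorProduct.tmul_pow,
    idem_pow (Tone_mul_Tone k hn hQ) (show 0 < n' ^ 2 - n' from by
      have := h2n_le hn; omega)]

lemma DF_eq2 [CharZero k] (hn : 2 < n') (hQ : IsPrimitiveRoot Q' (n' ^ 2)) :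
    DF k n' Q' = (gF k n' (Q' ^ n') ⊗ₜ[k] 1) *
      (Tthree k n' Q' ⊗ₜ[k] (gK k n' (Q' ^ n') ^ (n' ^ 2 - 1)) +
        Tfour k n' Q' ⊗ₜ[k] (gK k n' (Q' ^ n') ^ (n' - 1))) +
      1 ⊗ₜ[k] gF k n' (Q' ^ n') := by
  rw [DF, Algebra.TensorProduct.tmul_pow, Algebra.TensorProduct.tmul_pow,
    idem_pow (Tthree_mul_Tthree k hn hQ) (show 0 < n' ^ 2 - 1 from by
      have := h2n_le hn; omega),
    idem_pow (Tfour_mul_Tfour k hn hQ) (show 0 < n' - 1 from by omega)]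

lemma DE_eq [CharZero k] (hn : 2 < n') (hQ : IsPrimitiveRoot Q' (n' ^ 2)) : DE k n' Q' =
    (gE k n' (Q' ^ n') * Tone k n' Q') ⊗ₜ[k] (gK k n' (Q' ^ n') ^ (n' ^ 2 - n')) +
      (gE k n' (Q' ^ n') * Ttwo k n' Q') ⊗ₜ[k] 1 +
      gK k n' (Q' ^ n') ⊗ₜ[k] gE k n' (Q' ^ n') := by
  rw [DE_eq2 k hn hQ, mul_add]
  simp only [Algebra.TensorProduct.tmul_mul_tmul, one_mul, mul_one]

lemma DF_eq [CharZero k] (hn : 2 < n') (hQ : IsPrimitiveRoot Q' (n' ^ 2)) : DF k n' Q' =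
    (gF k n' (Q' ^ n') * Tthree k n' Q') ⊗ₜ[k] (gK k n' (Q' ^ n') ^ (n' ^ 2 - 1)) +
      (gF k n' (Q' ^ n') * Tfour k n' Q') ⊗ₜ[k] (gK k n' (Q' ^ n') ^ (n' - 1)) +
      1 ⊗ₜ[k] gF k n' (Q' ^ n') := by
  rw [DF_eq2 k hn hQ, mul_add]
  simp only [Algebra.TensorProduct.tmul_mul_tmul, one_mul, mul_one]

end DeltaElts

section ConjLemmas

variable (n : ℕ) (q : k)

lemma conj_K (x T : QG k n q) (c : k) (hT : T * gKi k n q = gKi k n q * T)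
    (hx : gK k n q * x * gKi k n q = c • x) :
    gK k n q * (x * T) * gKi k n q = c • (x * T) := by
  rw [← mul_assoc, mul_assoc (gK k n q * x) T (gKi k n q), hT, ← mul_assoc, hx, smul_mul_assoc]

lemma conj_KK (m : ℕ) : gK k n q * gK k n q ^ m * gKi k n q = gK k n q ^ m := by
  rw [← pow_succ', pow_succ, mul_assoc, K_mul_Ki, mul_one]

lemma conj_K1 : gK k n q * 1 * gKi k n q = 1 := by rw [mul_one, K_mul_Ki]

lemma conj_Kself : gK k n q * gK k n q * gKi k n q = gK k n q := by
  rw [mul_assoc, K_mul_Ki, mul_one]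

end ConjLemmas

section DRel

variable {n : ℕ} {Q : k}

lemma DR1 : DK k n Q * DKi k n Q = 1 := by
  rw [DK, DKi, Algebra.TensorProduct.tmul_mul_tmul, K_mul_Ki, Algebra.TensorProduct.one_def]

lemma DR2 : DKi k n Q * DK k n Q = 1 := by
  rw [DK, DKi, Algebra.TensorProduct.tmul_mul_tmul, Ki_mul_K, Algebra.TensorProduct.one_def]

lemma DR8 : DK k n Q ^ (n ^ 2) = 1 := by
  rw [DK, Algebra.TensorProduct.tmul_pow, Kpow_one, Algebra.TensorProduct.one_def]

lemma DR3 [CharZero k] (hn : 2 < n) (hQ : IsPrimitiveRoot Q (n ^ 2)) :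
    DK k n Q * DE k n Q * DKi k n Q = ((Q ^ n) ^ 2) • DE k n Q := by
  have h0 : 0 < n := by omega
  have hT1Ki : Tone k n Q * gKi k n (Q ^ n) = gKi k n (Q ^ n) * Tone k n Q := by
    rw [Ki_eq k n (Q ^ n) h0, Tone_Kpow_comm]
  have hT2Ki : Ttwo k n Q * gKi k n (Q ^ n) = gKi k n (Q ^ n) * Ttwo k n Q := by
    rw [Ki_eq k n (Q ^ n) h0, Ttwo_Kpow_comm]
  rw [DE_eq k hn hQ, DK, DKi]
  rw [mul_add, mul_add, add_mul, add_mul]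
  simp only [Algebra.TensorProduct.tmul_mul_tmul]
  rw [conj_K k n (Q ^ n) (gE k n (Q ^ n)) (Tone k n Q) ((Q ^ n) ^ 2) hT1Ki (KEKi k n (Q ^ n)),
    conj_K k n (Q ^ n) (gE k n (Q ^ n)) (Ttwo k n Q) ((Q ^ n) ^ 2) hT2Ki (KEKi k n (Q ^ n)),
    conj_KK k n (Q ^ n) (n ^ 2 - n), conj_K1 k n (Q ^ n), conj_Kself k n (Q ^ n),
    KEKi k n (Q ^ n)]
  rw [← TensorProduct.smul_tmul', ← TensorProduct.smul_tmul', TensorProduct.tmul_smul,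
    smul_add, smul_add]

lemma DR4 [CharZero k] (hn : 2 < n) (hQ : IsPrimitiveRoot Q (n ^ 2)) :
    DK k n Q * DF k n Q * DKi k n Q = (((Q ^ n) ^ 2)⁻¹) • DF k n Q := by
  have h0 : 0 < n := by omega
  have hT3Ki : Tthree k n Q * gKi k n (Q ^ n) = gKi k n (Q ^ n) * Tthree k n Q := by
    rw [Ki_eq k n (Q ^ n) h0, Tthree_Kpow_comm]
  have hT4Ki : Tfour k n Q * gKi k n (Q ^ n) = gKi k n (Q ^ n) * Tfour k n Q := by
    rw [Ki_eq k n (Q ^ n) h0, Tfour_Kpow_comm]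
  rw [DF_eq k hn hQ, DK, DKi]
  rw [mul_add, mul_add, add_mul, add_mul]
  simp only [Algebra.TensorProduct.tmul_mul_tmul]
  rw [conj_K k n (Q ^ n) (gF k n (Q ^ n)) (Tthree k n Q) (((Q ^ n) ^ 2)⁻¹) hT3Ki
      (KFKi k n (Q ^ n)),
    conj_K k n (Q ^ n) (gF k n (Q ^ n)) (Tfour k n Q) (((Q ^ n) ^ 2)⁻¹) hT4Ki
      (KFKi k n (Q ^ n)),
    conj_KK k n (Q ^ n) (n ^ 2 - 1), conj_KK k n (Q ^ n) (n - 1), conj_K1 k n (Q ^ n),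
    KFKi k n (Q ^ n)]
  rw [← TensorProduct.smul_tmul', ← TensorProduct.smul_tmul', TensorProduct.tmul_smul,
    smul_add, smul_add]

end DRel

section DR5sec

variable {n : ℕ} {Q : k}

lemma DR5 [CharZero k] (hn : 2 < n) (hQ : IsPrimitiveRoot Q (n ^ 2)) :
    DE k n Q * DF k n Q - DF k n Q * DE k n Q =
      ((Q ^ n) - (Q ^ n)⁻¹)⁻¹ • (DK k n Q - DKi k n Q) := by
  have h0 : 0 < n := by omega
  have h2n := h2n_le hn
  have hT1K : Tone k n Q * gK k n (Q ^ n) = gK k n (Q ^ n) * Tone k n Q := by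
    have h := Tone_Kpow_comm k (n := n) (Q := Q) 1; rwa [pow_one] at h
  have hT2K : Ttwo k n Q * gK k n (Q ^ n) = gK k n (Q ^ n) * Ttwo k n Q := by
    have h := Ttwo_Kpow_comm k (n := n) (Q := Q) 1; rwa [pow_one] at h
  have hT3K : Tthree k n Q * gK k n (Q ^ n) = gK k n (Q ^ n) * Tthree k n Q := by
    have h := Tthree_Kpow_comm k (n := n) (Q := Q) 1; rwa [pow_one] at h
  have hT4K : Tfour k n Q * gK k n (Q ^ n) = gK k n (Q ^ n) * Tfour k n Q := by
    have h := Tfour_Kpow_comm k (n := n) (Q := Q) 1; rwa [pow_one] at h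
  have hKaF : gK k n (Q ^ n) ^ (n ^ 2 - n) * gF k n (Q ^ n) = gF k n (Q ^ n) * (gK k n (Q ^ n) ^ (n ^ 2 - n)) := by
    rw [Kpow_mul_F k hn hQ, sc1 k hn hQ, one_smul]
  have hKbE : gK k n (Q ^ n) ^ (n ^ 2 - 1) * gE k n (Q ^ n) = Q ^ (2 * n ^ 2 - 2 * n) • (gE k n (Q ^ n) * (gK k n (Q ^ n) ^ (n ^ 2 - 1))) := by
    rw [Kpow_mul_E k n Q, sc3 k hn hQ]
  have hKdE : gK k n (Q ^ n) ^ (n - 1) * gE k n (Q ^ n) = Q ^ (2 * n ^ 2 - 2 * n) • (gE k n (Q ^ n) * (gK k n (Q ^ n) ^ (n - 1))) := by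
    rw [Kpow_mul_E k n Q, sc4 k hn hQ]
  have h1 : (Tone k n Q ⊗ₜ[k] (gK k n (Q ^ n) ^ (n ^ 2 - n)) + Ttwo k n Q ⊗ₜ[k] (1 : QG k n (Q ^ n))) * (gF k n (Q ^ n) ⊗ₜ[k] (1 : QG k n (Q ^ n))) = (gF k n (Q ^ n) ⊗ₜ[k] (1 : QG k n (Q ^ n))) * (Tfour k n Q ⊗ₜ[k] (gK k n (Q ^ n) ^ (n ^ 2 - n)) + Tthree k n Q ⊗ₜ[k] (1 : QG k n (Q ^ n))) := by
    rw [add_mul, mul_add]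
    simp only [Algebra.TensorProduct.tmul_mul_tmul, one_mul, mul_one]
    rw [Tone_mul_F k hn hQ, Ttwo_mul_F k hn hQ]
  have h2 : (Tfour k n Q ⊗ₜ[k] (gK k n (Q ^ n) ^ (n ^ 2 - n)) + Tthree k n Q ⊗ₜ[k] (1 : QG k n (Q ^ n))) * (Tthree k n Q ⊗ₜ[k] (gK k n (Q ^ n) ^ (n ^ 2 - 1)) + Tfour k n Q ⊗ₜ[k] (gK k n (Q ^ n) ^ (n - 1))) = (1 : QG k n (Q ^ n)) ⊗ₜ[k] (gK k n (Q ^ n) ^ (n ^ 2 - 1)) := by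
    rw [add_mul, mul_add, mul_add]
    simp only [Algebra.TensorProduct.tmul_mul_tmul, one_mul, mul_one]
    rw [Tfour_mul_Tthree k hn hQ, Tfour_mul_Tfour k hn hQ, Tthree_mul_Tthree k hn hQ,
      Tthree_mul_Tfour k hn hQ, TensorProduct.zero_tmul, TensorProduct.zero_tmul, zero_add,
      add_zero, ← pow_add, show n ^ 2 - n + (n - 1) = n ^ 2 - 1 from by omega,
      ← TensorProduct.add_tmul, show Tfour k n Q + Tthree k n Q = (1 : QG k n (Q ^ n)) from by
        rw [add_comm]; exact Tthree_add_Tfour k hn hQ]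
  have h3 : (Tthree k n Q ⊗ₜ[k] (gK k n (Q ^ n) ^ (n ^ 2 - 1)) + Tfour k n Q ⊗ₜ[k] (gK k n (Q ^ n) ^ (n - 1))) * (gE k n (Q ^ n) ⊗ₜ[k] (1 : QG k n (Q ^ n))) = (gE k n (Q ^ n) ⊗ₜ[k] (1 : QG k n (Q ^ n))) * (Ttwo k n Q ⊗ₜ[k] (gK k n (Q ^ n) ^ (n ^ 2 - 1)) + Tone k n Q ⊗ₜ[k] (gK k n (Q ^ n) ^ (n - 1))) := by
    rw [add_mul, mul_add]
    simp only [Algebra.TensorProduct.tmul_mul_tmul, one_mul, mul_one]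
    rw [Tthree_mul_E k hn hQ, Tfour_mul_E k hn hQ]
  have h4 : (Ttwo k n Q ⊗ₜ[k] (gK k n (Q ^ n) ^ (n ^ 2 - 1)) + Tone k n Q ⊗ₜ[k] (gK k n (Q ^ n) ^ (n - 1))) * (Tone k n Q ⊗ₜ[k] (gK k n (Q ^ n) ^ (n ^ 2 - n)) + Ttwo k n Q ⊗ₜ[k] (1 : QG k n (Q ^ n))) = (1 : QG k n (Q ^ n)) ⊗ₜ[k] (gK k n (Q ^ n) ^ (n ^ 2 - 1)) := by
    rw [add_mul, mul_add, mul_add]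
    simp only [Algebra.TensorProduct.tmul_mul_tmul, one_mul, mul_one]
    rw [Ttwo_mul_Tone k hn hQ, Ttwo_mul_Ttwo k hn hQ, Tone_mul_Tone k hn hQ,
      Tone_mul_Ttwo k hn hQ, TensorProduct.zero_tmul, TensorProduct.zero_tmul, zero_add,
      add_zero, ← pow_add, show n - 1 + (n ^ 2 - n) = n ^ 2 - 1 from by omega,
      ← TensorProduct.add_tmul, show Ttwo k n Q + Tone k n Q = (1 : QG k n (Q ^ n)) from by
        rw [add_comm]; exact Tone_add_Ttwo k hn hQ]
  have h5 : (Tone k n Q ⊗ₜ[k] (gK k n (Q ^ n) ^ (n ^ 2 - n)) + Ttwo k n Q ⊗ₜ[k] (1 : QG k n (Q ^ n))) * ((1 : QG k n (Q ^ n)) ⊗ₜ[k] gF k n (Q ^ n)) = ((1 : QG k n (Q ^ n)) ⊗ₜ[k] gF k n (Q ^ n)) * (Tone k n Q ⊗ₜ[k] (gK k n (Q ^ n) ^ (n ^ 2 - n)) + Ttwo k n Q ⊗ₜ[k] (1 : QG k n (Q ^ n))) := by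
    rw [add_mul, mul_add]
    simp only [Algebra.TensorProduct.tmul_mul_tmul, one_mul, mul_one]
    rw [hKaF]
  have h6 : (Tthree k n Q ⊗ₜ[k] (gK k n (Q ^ n) ^ (n ^ 2 - 1)) + Tfour k n Q ⊗ₜ[k] (gK k n (Q ^ n) ^ (n - 1))) * (gK k n (Q ^ n) ⊗ₜ[k] gE k n (Q ^ n)) =
      Q ^ (2 * n ^ 2 - 2 * n) • ((gK k n (Q ^ n) ⊗ₜ[k] gE k n (Q ^ n)) * (Tthree k n Q ⊗ₜ[k] (gK k n (Q ^ n) ^ (n ^ 2 - 1)) + Tfour k n Q ⊗ₜ[k] (gK k n (Q ^ n) ^ (n - 1)))) := by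
    rw [add_mul, mul_add]
    simp only [Algebra.TensorProduct.tmul_mul_tmul]
    rw [hT3K, hT4K, hKbE, hKdE, TensorProduct.tmul_smul, TensorProduct.tmul_smul, smul_add]
  have h7 : (gK k n (Q ^ n) ⊗ₜ[k] gE k n (Q ^ n)) * (gF k n (Q ^ n) ⊗ₜ[k] (1 : QG k n (Q ^ n))) =
      Q ^ (2 * n ^ 2 - 2 * n) • ((gF k n (Q ^ n) ⊗ₜ[k] (1 : QG k n (Q ^ n))) * (gK k n (Q ^ n) ⊗ₜ[k] gE k n (Q ^ n))) := by
    simp only [Algebra.TensorProduct.tmul_mul_tmul, one_mul, mul_one]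
    rw [K_mul_F, q2inv_eq k hn hQ, ← TensorProduct.smul_tmul']
  have hA : ((gE k n (Q ^ n) ⊗ₜ[k] (1 : QG k n (Q ^ n))) * (Tone k n Q ⊗ₜ[k] (gK k n (Q ^ n) ^ (n ^ 2 - n)) + Ttwo k n Q ⊗ₜ[k] (1 : QG k n (Q ^ n)))) * ((gF k n (Q ^ n) ⊗ₜ[k] (1 : QG k n (Q ^ n))) * (Tthree k n Q ⊗ₜ[k] (gK k n (Q ^ n) ^ (n ^ 2 - 1)) + Tfour k n Q ⊗ₜ[k] (gK k n (Q ^ n) ^ (n - 1)))) = (gE k n (Q ^ n) * gF k n (Q ^ n)) ⊗ₜ[k] (gK k n (Q ^ n) ^ (n ^ 2 - 1)) := by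
    rw [mul_assoc, ← mul_assoc (Tone k n Q ⊗ₜ[k] (gK k n (Q ^ n) ^ (n ^ 2 - n)) + Ttwo k n Q ⊗ₜ[k] (1 : QG k n (Q ^ n))), h1, mul_assoc, h2]
    simp only [Algebra.TensorProduct.tmul_mul_tmul, one_mul, mul_one]
  have hB : ((gF k n (Q ^ n) ⊗ₜ[k] (1 : QG k n (Q ^ n))) * (Tthree k n Q ⊗ₜ[k] (gK k n (Q ^ n) ^ (n ^ 2 - 1)) + Tfour k n Q ⊗ₜ[k] (gK k n (Q ^ n) ^ (n - 1)))) * ((gE k n (Q ^ n) ⊗ₜ[k] (1 : QG k n (Q ^ n))) * (Tone k n Q ⊗ₜ[k] (gK k n (Q ^ n) ^ (n ^ 2 - n)) + Ttwo k n Q ⊗ₜ[k] (1 : QG k n (Q ^ n)))) = (gF k n (Q ^ n) * gE k n (Q ^ n)) ⊗ₜ[k] (gK k n (Q ^ n) ^ (n ^ 2 - 1)) := by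
    rw [mul_assoc, ← mul_assoc (Tthree k n Q ⊗ₜ[k] (gK k n (Q ^ n) ^ (n ^ 2 - 1)) + Tfour k n Q ⊗ₜ[k] (gK k n (Q ^ n) ^ (n - 1))), h3, mul_assoc, h4]
    simp only [Algebra.TensorProduct.tmul_mul_tmul, one_mul, mul_one]
  have hC : ((gE k n (Q ^ n) ⊗ₜ[k] (1 : QG k n (Q ^ n))) * (Tone k n Q ⊗ₜ[k] (gK k n (Q ^ n) ^ (n ^ 2 - n)) + Ttwo k n Q ⊗ₜ[k] (1 : QG k n (Q ^ n)))) * ((1 : QG k n (Q ^ n)) ⊗ₜ[k] gF k n (Q ^ n)) = ((1 : QG k n (Q ^ n)) ⊗ₜ[k] gF k n (Q ^ n)) * ((gE k n (Q ^ n) ⊗ₜ[k] (1 : QG k n (Q ^ n))) * (Tone k n Q ⊗ₜ[k] (gK k n (Q ^ n) ^ (n ^ 2 - n)) + Ttwo k n Q ⊗ₜ[k] (1 : QG k n (Q ^ n)))) := by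
    rw [mul_assoc, h5, ← mul_assoc, ← mul_assoc]
    simp only [Algebra.TensorProduct.tmul_mul_tmul, one_mul, mul_one]
  have hD : (gK k n (Q ^ n) ⊗ₜ[k] gE k n (Q ^ n)) * ((gF k n (Q ^ n) ⊗ₜ[k] (1 : QG k n (Q ^ n))) * (Tthree k n Q ⊗ₜ[k] (gK k n (Q ^ n) ^ (n ^ 2 - 1)) + Tfour k n Q ⊗ₜ[k] (gK k n (Q ^ n) ^ (n - 1)))) = ((gF k n (Q ^ n) ⊗ₜ[k] (1 : QG k n (Q ^ n))) * (Tthree k n Q ⊗ₜ[k] (gK k n (Q ^ n) ^ (n ^ 2 - 1)) + Tfour k n Q ⊗ₜ[k] (gK k n (Q ^ n) ^ (n - 1)))) * (gK k n (Q ^ n) ⊗ₜ[k] gE k n (Q ^ n)) := by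
    rw [← mul_assoc, h7, smul_mul_assoc, mul_assoc, mul_assoc, h6, mul_smul_comm]
  have hE5 : (gK k n (Q ^ n) ⊗ₜ[k] gE k n (Q ^ n)) * ((1 : QG k n (Q ^ n)) ⊗ₜ[k] gF k n (Q ^ n)) - ((1 : QG k n (Q ^ n)) ⊗ₜ[k] gF k n (Q ^ n)) * (gK k n (Q ^ n) ⊗ₜ[k] gE k n (Q ^ n)) =
      ((Q ^ n) - (Q ^ n)⁻¹)⁻¹ • (gK k n (Q ^ n) ⊗ₜ[k] gK k n (Q ^ n) - gK k n (Q ^ n) ⊗ₜ[k] gKi k n (Q ^ n)) := by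
    simp only [Algebra.TensorProduct.tmul_mul_tmul, one_mul, mul_one]
    rw [← TensorProduct.tmul_sub, EF_comm k n (Q ^ n), TensorProduct.tmul_smul,
      TensorProduct.tmul_sub]
  have hAB : ((gE k n (Q ^ n) ⊗ₜ[k] (1 : QG k n (Q ^ n))) * (Tone k n Q ⊗ₜ[k] (gK k n (Q ^ n) ^ (n ^ 2 - n)) + Ttwo k n Q ⊗ₜ[k] (1 : QG k n (Q ^ n)))) * ((gF k n (Q ^ n) ⊗ₜ[k] (1 : QG k n (Q ^ n))) * (Tthree k n Q ⊗ₜ[k] (gK k n (Q ^ n) ^ (n ^ 2 - 1)) + Tfour k n Q ⊗ₜ[k] (gK k n (Q ^ n) ^ (n - 1)))) - ((gF k n (Q ^ n) ⊗ₜ[k] (1 : QG k n (Q ^ n))) * (Tthree k n Q ⊗ₜ[k] (gK k n (Q ^ n) ^ (n ^ 2 - 1)) + Tfour k n Q ⊗ₜ[k] (gK k n (Q ^ n) ^ (n - 1)))) * ((gE k n (Q ^ n) ⊗ₜ[k] (1 : QG k n (Q ^ n))) * (Tone k n Q ⊗ₜ[k] (gK k n (Q ^ n) ^ (n ^ 2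 - n)) + Ttwo k n Q ⊗ₜ[k] (1 : QG k n (Q ^ n)))) =
      ((Q ^ n) - (Q ^ n)⁻¹)⁻¹ • (gK k n (Q ^ n) ⊗ₜ[k] gKi k n (Q ^ n) - gKi k n (Q ^ n) ⊗ₜ[k] gKi k n (Q ^ n)) := by
    rw [hA, hB, ← TensorProduct.sub_tmul, EF_comm k n (Q ^ n), ← TensorProduct.smul_tmul',
      TensorProduct.sub_tmul, ← Ki_eq k n (Q ^ n) h0]
  have expand : (((gE k n (Q ^ n) ⊗ₜ[k] (1 : QG k n (Q ^ n))) * (Tone k n Q ⊗ₜ[k] (gK k n (Q ^ n) ^ (n ^ 2 - n)) + Ttwo k n Q ⊗ₜ[k] (1 : QG k n (Q ^ n)))) + (gK k n (Q ^ n) ⊗ₜ[k] gE k n (Q ^ n))) * (((gF k n (Q ^ n) ⊗ₜ[k] (1 : QG k n (Q ^ n))) * (Tthree k n Q ⊗ₜ[k] (gK k n (Q ^ n) ^ (n ^ 2 - 1)) + Tfour k n Q ⊗ₜ[k] (gK k n (Q ^ n) ^ (n - 1)))) + ((1 : QG k n (Q ^ n)) ⊗ₜ[k] gF k n (Q ^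 n))) - (((gF k n (Q ^ n) ⊗ₜ[k] (1 : QG k n (Q ^ n))) * (Tthree k n Q ⊗ₜ[k] (gK k n (Q ^ n) ^ (n ^ 2 - 1)) + Tfour k n Q ⊗ₜ[k] (gK k n (Q ^ n) ^ (n - 1)))) + ((1 : QG k n (Q ^ n)) ⊗ₜ[k] gF k n (Q ^ n))) * (((gE k n (Q ^ n) ⊗ₜ[k] (1 : QG k n (Q ^ n))) * (Tone k n Q ⊗ₜ[k] (gK k n (Q ^ n) ^ (n ^ 2 - n)) + Ttwo k n Q ⊗ₜ[k] (1 : QG k n (Q ^ n)))) + (gK k n (Q ^ n) ⊗ₜ[k] gE k n (Q ^ n))) =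
      (((gE k n (Q ^ n) ⊗ₜ[k] (1 : QG k n (Q ^ n))) * (Tone k n Q ⊗ₜ[k] (gK k n (Q ^ n) ^ (n ^ 2 - n)) + Ttwo k n Q ⊗ₜ[k] (1 : QG k n (Q ^ n)))) * ((gF k n (Q ^ n) ⊗ₜ[k] (1 : QG k n (Q ^ n))) * (Tthree k n Q ⊗ₜ[k] (gK k n (Q ^ n) ^ (n ^ 2 - 1)) + Tfour k n Q ⊗ₜ[k] (gK k n (Q ^ n) ^ (n - 1)))) - ((gF k n (Q ^ n) ⊗ₜ[k] (1 : QG k n (Q ^ n))) * (Tthree k n Q ⊗ₜ[k] (gK k n (Q ^ n) ^ (n ^ 2 - 1)) + Tfour k n Q ⊗ₜ[k] (gK k n (Q ^ n) ^ (n - 1)))) * ((gE k n (Q ^ n) ⊗ₜ[k] (1 : QG k n (Q ^ n))) * (Tone k n Q ⊗ₜ[k] (gK k n (Q ^ n) ^ (n ^ 2 - n)) + Ttwo k n Q ⊗ₜ[k] (1 : QG k n (Q ^ n))))) + (((gE k n (Q ^ n) ⊗ₜ[k] (1 : QG k n (Q ^ n))) * (Tone k n Q ⊗ₜ[k] (gK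 k n (Q ^ n) ^ (n ^ 2 - n)) + Ttwo k n Q ⊗ₜ[k] (1 : QG k n (Q ^ n)))) * ((1 : QG k n (Q ^ n)) ⊗ₜ[k] gF k n (Q ^ n)) - ((1 : QG k n (Q ^ n)) ⊗ₜ[k] gF k n (Q ^ n)) * ((gE k n (Q ^ n) ⊗ₜ[k] (1 : QG k n (Q ^ n))) * (Tone k n Q ⊗ₜ[k] (gK k n (Q ^ n) ^ (n ^ 2 - n)) + Ttwo k n Q ⊗ₜ[k] (1 : QG k n (Q ^ n))))) +
        ((gK k n (Q ^ n) ⊗ₜ[k] gE k n (Q ^ n)) * ((gF k n (Q ^ n) ⊗ₜ[k] (1 : QG k n (Q ^ n))) * (Tthree k n Q ⊗ₜ[k] (gK k n (Q ^ n) ^ (n ^ 2 - 1)) + Tfour k n Q ⊗ₜ[k] (gK k n (Q ^ n) ^ (n - 1)))) - ((gF k n (Q ^ n) ⊗ₜ[k] (1 : QG k n (Q ^ n))) * (Tthree k n Q ⊗ₜ[k] (gK k n (Q ^ n) ^ (n ^ 2 - 1)) + Tfour k n Q ⊗ₜ[k] (gK k n (Q ^ n) ^ (n - 1)))) * (gK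 k n (Q ^ n) ⊗ₜ[k] gE k n (Q ^ n))) + ((gK k n (Q ^ n) ⊗ₜ[k] gE k n (Q ^ n)) * ((1 : QG k n (Q ^ n)) ⊗ₜ[k] gF k n (Q ^ n)) - ((1 : QG k n (Q ^ n)) ⊗ₜ[k] gF k n (Q ^ n)) * (gK k n (Q ^ n) ⊗ₜ[k] gE k n (Q ^ n))) := by
    noncomm_ring
  rw [DE_eq2 k hn hQ, DF_eq2 k hn hQ, DK, DKi, expand, hC, hD, sub_self, sub_self, add_zero,
    add_zero, hAB, hE5, ← smul_add]
  congr 1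
  abel

end DR5sec

section DR67sec

variable {n : ℕ} {Q : k}

lemma coprime_two (hodd : Odd n) : Nat.Coprime 2 n :=
  (Nat.Prime.coprime_iff_not_dvd Nat.prime_two).mpr
    (Nat.two_dvd_ne_zero.mpr (Nat.odd_iff.mp hodd))

lemma qprim (hn : 2 < n) (hQ : IsPrimitiveRoot Q (n ^ 2)) : IsPrimitiveRoot (Q ^ n) n :=
  hQ.pow (by positivity) (pow_two n)

lemma DR6 [CharZero k] (hn : 2 < n) (hodd : Odd n) (hQ : IsPrimitiveRoot Q (n ^ 2)) :
    DE k n Q ^ n = 0 := by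
  have h0 : 0 < n := by omega
  have h2n := h2n_le hn
  have ht : IsPrimitiveRoot (Q ^ (2 * n)) n := by
    have h := (qprim k hn hQ).pow_of_coprime 2 (coprime_two hodd)
    rwa [q2_eq k] at h
  have hT1K : Tone k n Q * gK k n (Q ^ n) = gK k n (Q ^ n) * Tone k n Q := by
    have h := Tone_Kpow_comm k (n := n) (Q := Q) 1; rwa [pow_one] at h
  have hT2K : Ttwo k n Q * gK k n (Q ^ n) = gK k n (Q ^ n) * Ttwo k n Q := by
    have h := Ttwo_Kpow_comm k (n := n) (Q := Q) 1; rwa [pow_one] at h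
  have hKaE : gK k n (Q ^ n) ^ (n ^ 2 - n) * gE k n (Q ^ n) = gE k n (Q ^ n) * (gK k n (Q ^ n) ^ (n ^ 2 - n)) := by
    rw [Kpow_mul_E k n Q, sc2 k hn hQ, one_smul]
  have hphiKE : (Tone k n Q ⊗ₜ[k] (gK k n (Q ^ n) ^ (n ^ 2 - n)) + Ttwo k n Q ⊗ₜ[k] (1 : QG k n (Q ^ n))) * (gK k n (Q ^ n) ⊗ₜ[k] gE k n (Q ^ n)) = (gK k n (Q ^ n) ⊗ₜ[k] gE k n (Q ^ n)) * (Tone k n Q ⊗ₜ[k] (gK k n (Q ^ n) ^ (n ^ 2 - n)) + Ttwo k n Q ⊗ₜ[k] (1 : QG k n (Q ^ n))) := by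
    rw [add_mul, mul_add]
    simp only [Algebra.TensorProduct.tmul_mul_tmul, one_mul, mul_one]
    rw [hT1K, hT2K, hKaE]
  have hyx : (gK k n (Q ^ n) ⊗ₜ[k] gE k n (Q ^ n)) * ((gE k n (Q ^ n) ⊗ₜ[k] (1 : QG k n (Q ^ n))) * (Tone k n Q ⊗ₜ[k] (gK k n (Q ^ n) ^ (n ^ 2 - n)) + Ttwo k n Q ⊗ₜ[k] (1 : QG k n (Q ^ n)))) = Q ^ (2 * n) • (((gE k n (Q ^ n) ⊗ₜ[k] (1 : QG k n (Q ^ n))) * (Tone k n Q ⊗ₜ[k] (gK k n (Q ^ n) ^ (n ^ 2 - n)) + Ttwo k n Q ⊗ₜ[k] (1 : QG k n (Q ^ n)))) * (gK k n (Q ^ n) ⊗ₜ[k] gE k n (Q ^ n))) := by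
    rw [← mul_assoc, mul_assoc (gE k n (Q ^ n) ⊗ₜ[k] (1 : QG k n (Q ^ n))) (Tone k n Q ⊗ₜ[k] (gK k n (Q ^ n) ^ (n ^ 2 - n)) + Ttwo k n Q ⊗ₜ[k] (1 : QG k n (Q ^ n))) (gK k n (Q ^ n) ⊗ₜ[k] gE k n (Q ^ n)), hphiKE,
      ← mul_assoc (gE k n (Q ^ n) ⊗ₜ[k] (1 : QG k n (Q ^ n))) (gK k n (Q ^ n) ⊗ₜ[k] gE k n (Q ^ n)) (Tone k n Q ⊗ₜ[k] (gK k n (Q ^ n) ^ (n ^ 2 - n)) + Ttwo k n Q ⊗ₜ[k] (1 : QG k n (Q ^ n)))]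
    simp only [Algebra.TensorProduct.tmul_mul_tmul, one_mul, mul_one]
    rw [K_mul_E, q2_eq k, ← TensorProduct.smul_tmul', smul_mul_assoc]
  have hEn : (gE k n (Q ^ n) ⊗ₜ[k] (1 : QG k n (Q ^ n))) ^ n = 0 := by
    rw [Algebra.TensorProduct.tmul_pow, Epow_zero, TensorProduct.zero_tmul]
  have hshift : ∀ j, (fun j => (∑ i ∈ Finset.range (2 * n), oneIdem k n Q (i + 2 * n * j)) ⊗ₜ[k] (gK k n (Q ^ n) ^ (n ^ 2 - n)) + (∑ i ∈ Finset.Ico (2 * n) (n ^ 2), oneIdem k n Q (i + 2 * n * j)) ⊗ₜ[k] (1 : QG k n (Q ^ n))) j * (gE k n (Q ^ n) ⊗ₜ[k] (1 : QG k n (Q ^ n))) = (gE k n (Q ^ n) ⊗ₜ[k] (1 : QG k n (Q ^ n))) * (fun j => (∑ i ∈ Finset.range (2 * n), oneIdem k n Q (i + 2 * n * j)) ⊗ₜ[k] (gK k n (Q ^ n) ^ (n ^ 2 - n)) + (∑ i ∈ Finset.Ico (2 * n) (n ^ 2), oneIdem k n Q (i + 2 * n * j)) ⊗ₜ[k] (1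 : QG k n (Q ^ n))) (j + 1) := by
    intro j
    simp only
    rw [add_mul, mul_add]
    simp only [Algebra.TensorProduct.tmul_mul_tmul, one_mul, mul_one]
    congr 1
    · congr 1
      rw [Finset.sum_mul, Finset.mul_sum]
      apply Finset.sum_congr rfl
      intro i _
      rw [oneIdem_mul_E k hn hQ,
        show i + 2 * n * j + 2 * n = i + 2 * n * (j + 1) from by rw [Nat.mul_succ]; omega]
    · congr 1
      rw [Finset.sum_mul, Finset.mul_sum]
      apply Finset.sum_congr rfl
      intro i _
      rw [oneIdem_mul_E k hn hQ,
        show i + 2 * n * j + 2 * n = i + 2 * n * (j + 1) from by rw [Nat.mul_succ]; omega]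
  have key := push_pow_eq_zero (gE k n (Q ^ n) ⊗ₜ[k] (1 : QG k n (Q ^ n))) (fun j => (∑ i ∈ Finset.range (2 * n), oneIdem k n Q (i + 2 * n * j)) ⊗ₜ[k] (gK k n (Q ^ n) ^ (n ^ 2 - n)) + (∑ i ∈ Finset.Ico (2 * n) (n ^ 2), oneIdem k n Q (i + 2 * n * j)) ⊗ₜ[k] (1 : QG k n (Q ^ n))) hshift hEn
  rw [show (∑ i ∈ Finset.range (2 * n), oneIdem k n Q (i + 2 * n * 0)) = Tone k n Q from by
      rw [Tone]; exact Finset.sum_congr rfl fun i _ => by rw [Nat.mul_zero, Nat.add_zero],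
    show (∑ i ∈ Finset.Ico (2 * n) (n ^ 2), oneIdem k n Q (i + 2 * n * 0)) = Ttwo k n Q from by
      rw [Ttwo]; exact Finset.sum_congr rfl fun i _ => by rw [Nat.mul_zero, Nat.add_zero]]
    at key
  have hYn : (gK k n (Q ^ n) ⊗ₜ[k] gE k n (Q ^ n)) ^ n = 0 := by
    rw [Algebra.TensorProduct.tmul_pow, Epow_zero, TensorProduct.tmul_zero]
  rw [DE_eq2 k hn hQ]
  exact add_pow_eq_zero_of_qcomm ht hyx key hYn

lemma DR7 [CharZero k] (hn : 2 < n) (hodd : Odd n) (hQ : IsPrimitiveRoot Q (n ^ 2)) :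
    DF k n Q ^ n = 0 := by
  have h0 : 0 < n := by omega
  have h2n := h2n_le hn
  have hcop3 : Nat.Coprime (n - 1) n := by
    have h : Nat.Coprime (n - 1 + 1) (n - 1) := by simp [Nat.Coprime]
    have h2 := Nat.Coprime.symm h
    rwa [show n - 1 + 1 = n from by omega] at h2
  have ht : IsPrimitiveRoot (Q ^ (2 * n ^ 2 - 2 * n)) n := by
    have h := (qprim k hn hQ).pow_of_coprime (2 * (n - 1))
      (Nat.Coprime.mul (coprime_two hodd) hcop3)
    rwa [← pow_mul, show n * (2 * (n - 1)) = 2 * n ^ 2 - 2 * n from by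
      zify [show 1 ≤ n from by omega, show 2 * n ≤ 2 * n ^ 2 from by omega]; ring] at h
  have hKbF : gK k n (Q ^ n) ^ (n ^ 2 - 1) * gF k n (Q ^ n) = Q ^ (2 * n) • (gF k n (Q ^ n) * (gK k n (Q ^ n) ^ (n ^ 2 - 1))) := by
    rw [Kpow_mul_F k hn hQ, sc5 k hn hQ]
  have hKdF : gK k n (Q ^ n) ^ (n - 1) * gF k n (Q ^ n) = Q ^ (2 * n) • (gF k n (Q ^ n) * (gK k n (Q ^ n) ^ (n - 1))) := by
    rw [Kpow_mul_F k hn hQ, sc6 k hn hQ]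
  have hpsi1F : (Tthree k n Q ⊗ₜ[k] (gK k n (Q ^ n) ^ (n ^ 2 - 1)) + Tfour k n Q ⊗ₜ[k] (gK k n (Q ^ n) ^ (n - 1))) * ((1 : QG k n (Q ^ n)) ⊗ₜ[k] gF k n (Q ^ n)) = Q ^ (2 * n) • (((1 : QG k n (Q ^ n)) ⊗ₜ[k] gF k n (Q ^ n)) * (Tthree k n Q ⊗ₜ[k] (gK k n (Q ^ n) ^ (n ^ 2 - 1)) + Tfour k n Q ⊗ₜ[k] (gK k n (Q ^ n) ^ (n - 1)))) := by
    rw [add_mul, mul_add]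
    simp only [Algebra.TensorProduct.tmul_mul_tmul, one_mul, mul_one]
    rw [hKbF, hKdF, TensorProduct.tmul_smul, TensorProduct.tmul_smul, smul_add]
  have hyx : ((1 : QG k n (Q ^ n)) ⊗ₜ[k] gF k n (Q ^ n)) * ((gF k n (Q ^ n) ⊗ₜ[k] (1 : QG k n (Q ^ n))) * (Tthree k n Q ⊗ₜ[k] (gK k n (Q ^ n) ^ (n ^ 2 - 1)) + Tfour k n Q ⊗ₜ[k] (gK k n (Q ^ n) ^ (n - 1)))) = Q ^ (2 * n ^ 2 - 2 * n) • (((gF k n (Q ^ n) ⊗ₜ[k] (1 : QG k n (Q ^ n))) * (Tthree k n Q ⊗ₜ[k] (gK k n (Q ^ n) ^ (n ^ 2 - 1)) + Tfour k n Q ⊗ₜ[k] (gK k n (Q ^ n) ^ (n - 1)))) * ((1 : QG k n (Q ^ n)) ⊗ₜ[k] gF k n (Q ^ n))) := by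
    rw [← mul_assoc, mul_assoc (gF k n (Q ^ n) ⊗ₜ[k] (1 : QG k n (Q ^ n))) (Tthree k n Q ⊗ₜ[k] (gK k n (Q ^ n) ^ (n ^ 2 - 1)) + Tfour k n Q ⊗ₜ[k] (gK k n (Q ^ n) ^ (n - 1))) ((1 : QG k n (Q ^ n)) ⊗ₜ[k] gF k n (Q ^ n)), hpsi1F, mul_smul_comm,
      ← mul_assoc (gF k n (Q ^ n) ⊗ₜ[k] (1 : QG k n (Q ^ n))) ((1 : QG k n (Q ^ n)) ⊗ₜ[k] gF k n (Q ^ n)) (Tthree k n Q ⊗ₜ[k] (gK k n (Q ^ n) ^ (n ^ 2 - 1)) + Tfour k n Q ⊗ₜ[k] (gK k n (Q ^ n) ^ (n - 1)))]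
    simp only [Algebra.TensorProduct.tmul_mul_tmul, one_mul, mul_one]
    rw [smul_smul, ← pow_add, show 2 * n ^ 2 - 2 * n + 2 * n = n ^ 2 * 2 from by omega,
      pow_mul, Qnsq k hQ, one_pow, one_smul]
  have hFn : (gF k n (Q ^ n) ⊗ₜ[k] (1 : QG k n (Q ^ n))) ^ n = 0 := by
    rw [Algebra.TensorProduct.tmul_pow, Fpow_zero, TensorProduct.zero_tmul]
  have hshift : ∀ j, (fun j => (∑ i ∈ Finset.range (n ^ 2 - 2 * n), oneIdem k n Q (i + (n ^ 2 - 2 * n) * j)) ⊗ₜ[k] (gK k n (Q ^ n) ^ (n ^ 2 - 1)) + (∑ i ∈ Finset.Ico (n ^ 2 - 2 * n) (n ^ 2), oneIdem k n Q (i + (n ^ 2 - 2 * n) * j)) ⊗ₜ[k] (gK k n (Q ^ n) ^ (n - 1))) j * (gF k n (Q ^ n) ⊗ₜ[k] (1 : QG k n (Q ^ n))) = (gF k n (Q ^ n) ⊗ₜ[k] (1 : QG k n (Q ^ n))) * (fun j => (∑ i ∈ Finset.range (n ^ 2 - 2 * n), oneIdem k n Q (i + (n ^ 2 - 2 * n)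 * j)) ⊗ₜ[k] (gK k n (Q ^ n) ^ (n ^ 2 - 1)) + (∑ i ∈ Finset.Ico (n ^ 2 - 2 * n) (n ^ 2), oneIdem k n Q (i + (n ^ 2 - 2 * n) * j)) ⊗ₜ[k] (gK k n (Q ^ n) ^ (n - 1))) (j + 1) := by
    intro j
    simp only
    rw [add_mul, mul_add]
    simp only [Algebra.TensorProduct.tmul_mul_tmul, one_mul, mul_one]
    congr 1
    · congr 1
      rw [Finset.sum_mul, Finset.mul_sum]
      apply Finset.sum_congr rfl
      intro i _
      rw [oneIdem_mul_F k hn hQ,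
        show i + (n ^ 2 - 2 * n) * j + (n ^ 2 - 2 * n) = i + (n ^ 2 - 2 * n) * (j + 1) from by
          rw [Nat.mul_succ]; omega]
    · congr 1
      rw [Finset.sum_mul, Finset.mul_sum]
      apply Finset.sum_congr rfl
      intro i _
      rw [oneIdem_mul_F k hn hQ,
        show i + (n ^ 2 - 2 * n) * j + (n ^ 2 - 2 * n) = i + (n ^ 2 - 2 * n) * (j + 1) from by
          rw [Nat.mul_succ]; omega]
  have key := push_pow_eq_zero (gF k n (Q ^ n) ⊗ₜ[k] (1 : QG k n (Q ^ n))) (fun j => (∑ i ∈ Finset.range (n ^ 2 - 2 * n), oneIdem k n Q (i + (n ^ 2 - 2 * n) * j)) ⊗ₜ[k] (gK k n (Q ^ n) ^ (n ^ 2 - 1)) + (∑ i ∈ Finset.Ico (n ^ 2 - 2 * n) (n ^ 2), oneIdem k n Q (i + (n ^ 2 - 2 * n) * j)) ⊗ₜ[k] (gK k n (Q ^ n) ^ (n - 1))) hshift hFn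
  rw [show (∑ i ∈ Finset.range (n ^ 2 - 2 * n), oneIdem k n Q (i + (n ^ 2 - 2 * n) * 0)) =
        Tthree k n Q from by
      rw [Tthree]; exact Finset.sum_congr rfl fun i _ => by rw [Nat.mul_zero, Nat.add_zero],
    show (∑ i ∈ Finset.Ico (n ^ 2 - 2 * n) (n ^ 2), oneIdem k n Q
        (i + (n ^ 2 - 2 * n) * 0)) = Tfour k n Q from by
      rw [Tfour]; exact Finset.sum_congr rfl fun i _ => by rw [Nat.mul_zero, Nat.add_zero]]
    at key
  have hYn : ((1 : QG k n (Q ^ n)) ⊗ₜ[k] gF k n (Q ^ n)) ^ n = 0 := by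
    rw [Algebra.TensorProduct.tmul_pow, Fpow_zero, TensorProduct.tmul_zero]
  rw [DF_eq2 k hn hQ]
  exact add_pow_eq_zero_of_qcomm ht hyx key hYn

end DR67sec

section Main

/-- Construction of the comultiplication as an algebra hom out of the quotient. -/
theorem statement12' [CharZero k] (n : ℕ) (hn : 2 < n) (hodd : Odd n)
    (Q : k) (hQ : IsPrimitiveRoot Q (n ^ 2)) :
    ∃! Δ : QG k n (Q ^ n) →ₐ[k] QG k n (Q ^ n) ⊗[k] QG k n (Q ^ n), IsDelta k n Q Δ := by
  classical
  have hrel : ∀ ⦃x y : FreeAlgebra k (Fin 4)⦄, QGRel k n (Q ^ n) x y →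
      (FreeAlgebra.lift k ![DE k n Q, DF k n Q, DK k n Q, DKi k n Q]) x =
        (FreeAlgebra.lift k ![DE k n Q, DF k n Q, DK k n Q, DKi k n Q]) y := by
    intro x y h
    cases h with
    | KKinv =>
        simp only [map_mul, map_one, FreeAlgebra.lift_ι_apply]
        exact DR1 k
    | KinvK =>
        simp only [map_mul, map_one, FreeAlgebra.lift_ι_apply]
        exact DR2 k
    | KE =>
        simp only [map_mul, map_smul, FreeAlgebra.lift_ι_apply]
        exact DR3 k hn hQ
    | KF =>
        simp only [map_mul, map_smul, FreeAlgebra.lift_ι_apply]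
        exact DR4 k hn hQ
    | EF =>
        simp only [map_sub, map_mul, map_smul, FreeAlgebra.lift_ι_apply]
        exact DR5 k hn hQ
    | Epow =>
        simp only [map_pow, map_zero, FreeAlgebra.lift_ι_apply]
        exact DR6 k hn hodd hQ
    | Fpow =>
        simp only [map_pow, map_zero, FreeAlgebra.lift_ι_apply]
        exact DR7 k hn hodd hQ
    | Kpow =>
        simp only [map_pow, map_one, FreeAlgebra.lift_ι_apply]
        exact DR8 k
  set Δ0 : QG k n (Q ^ n) →ₐ[k] QG k n (Q ^ n) ⊗[k] QG k n (Q ^ n) :=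
    RingQuot.liftAlgHom k
      ⟨FreeAlgebra.lift k ![DE k n Q, DF k n Q, DK k n Q, DKi k n Q], hrel⟩ with hΔ0
  have hvE : Δ0 (gE k n (Q ^ n)) = DE k n Q := by
    have h := RingQuot.liftAlgHom_mkAlgHom_apply k
      (FreeAlgebra.lift k ![DE k n Q, DF k n Q, DK k n Q, DKi k n Q]) hrel (FreeAlgebra.ι k 0)
    rw [FreeAlgebra.lift_ι_apply] at h
    exact h
  have hvF : Δ0 (gF k n (Q ^ n)) = DF k n Q := by
    have h := RingQuot.liftAlgHom_mkAlgHom_apply k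
      (FreeAlgebra.lift k ![DE k n Q, DF k n Q, DK k n Q, DKi k n Q]) hrel (FreeAlgebra.ι k 1)
    rw [FreeAlgebra.lift_ι_apply] at h
    exact h
  have hvK : Δ0 (gK k n (Q ^ n)) = DK k n Q := by
    have h := RingQuot.liftAlgHom_mkAlgHom_apply k
      (FreeAlgebra.lift k ![DE k n Q, DF k n Q, DK k n Q, DKi k n Q]) hrel (FreeAlgebra.ι k 2)
    rw [FreeAlgebra.lift_ι_apply] at h
    exact h
  have hvKi : Δ0 (gKi k n (Q ^ n)) = DKi k n Q := by
    have h := RingQuot.liftAlgHom_mkAlgHom_apply k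
      (FreeAlgebra.lift k ![DE k n Q, DF k n Q, DK k n Q, DKi k n Q]) hrel (FreeAlgebra.ι k 3)
    rw [FreeAlgebra.lift_ι_apply] at h
    exact h
  have hIsD : IsDelta k n Q Δ0 := by
    refine ⟨?_, ?_, ?_, ?_⟩
    · rw [hvK]; rfl
    · rw [hvKi]; rfl
    · rw [hvE]; rfl
    · rw [hvF]; rfl
  refine ⟨Δ0, hIsD, ?_⟩
  intro Δ' hΔ'
  refine RingQuot.ringQuot_ext' k Δ' Δ0 (FreeAlgebra.hom_ext ?_)
  funext i
  fin_cases i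
  · show Δ' (gE k n (Q ^ n)) = Δ0 (gE k n (Q ^ n))
    rw [hΔ'.2.2.1, hvE, DE]
  · show Δ' (gF k n (Q ^ n)) = Δ0 (gF k n (Q ^ n))
    rw [hΔ'.2.2.2, hvF, DF]
  · show Δ' (gK k n (Q ^ n)) = Δ0 (gK k n (Q ^ n))
    rw [hΔ'.1, hvK, DK]
  · show Δ' (gKi k n (Q ^ n)) = Δ0 (gKi k n (Q ^ n))
    rw [hΔ'.2.1, hvKi, DKi]

end Main

/-- There exists a unique `k`-algebra homomorphism `Δ : H → H ⊗[k] H`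
(with `H ⊗[k] H` carrying the tensor product algebra structure) satisfying `Δ(K) = K ⊗ K`,
`Δ(K⁻¹) = K⁻¹ ⊗ K⁻¹`, `Δ(E) = (E ⊗ 1)(T₁ ⊗ K^{n²-n} + T₂ ⊗ 1) + K ⊗ E` and
`Δ(F) = (F ⊗ 1)(T₃ ⊗ K^{n²-1} + T₄ ⊗ K^{n-1}) + 1 ⊗ F`. -/
theorem statement12 [IsAlgClosed k] [CharZero k] (n : ℕ) (hn : 2 < n) (hodd : Odd n)
    (Q : k) (hQ : IsPrimitiveRoot Q (n ^ 2)) :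
    ∃! Δ : QG k n (Q ^ n) →ₐ[k] QG k n (Q ^ n) ⊗[k] QG k n (Q ^ n), IsDelta k n Q Δ := by
  exact statement12' k n hn hodd Q hQ

end SmallQuasiQuantumGroup
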